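/- arXiv:0902.0937 — 6 statements merged into one kernel-verified Lean document; each statement's English description precedes it below -/
import Mathlib

section
/- Let A and B be MR-subalgebras of 𝓛ₙ with tp(A) = tp(B). Then there exists an automorphism φ of 𝓛ₙ with φ[A] = B. -/
@[ext] structure Cube (n : ℕ) where
  pos : Finset (Fin n)
  neg : Finset (Fin n)
  disj : Disjoint pos neg

namespace Cube
variable {n : ℕ}

instance : PartialOrder (Cube n) where
  le x y := y.pos ⊆ x.pos ∧ y.neg ⊆ x.neg
  le_refl x := ⟨subset_rfl, subset_rfl⟩
  le_trans x y z h₁ h₂ := ⟨h₂.1.trans h₁.1, h₂.2.trans h₁.2⟩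
  le_antisymm x y h₁ h₂ :=
    Cube.ext (subset_antisymm h₂.1 h₁.1) (subset_antisymm h₂.2 h₁.2)

instance : OrderTop (Cube n) where
  top := ⟨∅, ∅, by simp⟩
  le_top x := ⟨Finset.empty_subset _, Finset.empty_subset _⟩

instance : SemilatticeSup (Cube n) where
  sup x y := ⟨x.pos ∩ y.pos, x.neg ∩ y.neg,
    x.disj.mono Finset.inter_subset_left Finset.inter_subset_left⟩
  le_sup_left x y := ⟨Finset.inter_subset_left, Finset.inter_subset_left⟩
  le_sup_right x y := ⟨Finset.inter_subset_right, Finset.inter_subset_right⟩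
  sup_le x y z hx hy := ⟨Finset.subset_inter hx.1 hy.1, Finset.subset_inter hx.2 hy.2⟩

/-- The reflection `Δ(x, y)` of `y` through the centre of `x`. -/
def delta (x y : Cube n) : Cube n :=
  ⟨x.pos ∪ (y.neg \ x.neg), x.neg ∪ (y.pos \ x.pos), by
    simp only [Finset.disjoint_union_left, Finset.disjoint_union_right]
    refine ⟨⟨x.disj, Finset.sdiff_disjoint⟩, Finset.disjoint_sdiff, ?_⟩
    exact y.disj.symm.mono Finset.sdiff_subset Finset.sdiff_subset⟩

lemma delta_le (x y : Cube n) : delta x y ≤ x :=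
  ⟨Finset.subset_union_left, Finset.subset_union_left⟩

/-- The co-rank of a face of the `n`-cube. -/
def corank (x : Cube n) : ℕ := (x.pos ∪ x.neg).card

/-- The set of coatoms of `𝓛ₙ` lying above `a`. -/
def coatomsAbove (a : Cube n) : Set (Cube n) := {c | corank c = 1 ∧ a ≤ c}

/-- `A` is an MR-subalgebra of `𝓛ₙ`. -/
def IsMRSub (A : Set (Cube n)) : Prop :=
  ⊤ ∈ A ∧ (∀ x ∈ A, ∀ y ∈ A, x ⊔ y ∈ A) ∧
    (∀ x ∈ A, ∀ y ∈ A, y ≤ x → delta x y ∈ A) ∧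
    (∀ x ∈ A, ∀ y ∈ A, ∃ m ∈ A, IsGLB {x, delta (x ⊔ y) y} m)

/-- The coatoms of a subalgebra `A`: maximal elements of `A \ {⊤}`. -/
def coAt (A : Set (Cube n)) : Set (Cube n) :=
  {a | a ∈ A ∧ a ≠ ⊤ ∧ ∀ b ∈ A, b ≠ ⊤ → a ≤ b → b = a}

/-- The coatoms `a` of `A` with `|𝒞ₐ| = i`. -/
def typeSet (A : Set (Cube n)) (i : ℕ) : Set (Cube n) :=
  {a | a ∈ coAt A ∧ (coatomsAbove a).ncard = i}

/-- An order automorphism of `𝓛ₙ` is a cubic automorphism when it preserves `Δ`. -/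
def IsAut (φ : Cube n ≃o Cube n) : Prop :=
  ∀ x y : Cube n, y ≤ x → φ (delta x y) = delta (φ x) (φ y)

/-- The set of automorphisms of `𝓛ₙ`. -/
def AutSet (n : ℕ) : Set (Cube n ≃o Cube n) := {φ | IsAut φ}

/-- An automorphism of the subposet `A` preserving `Δ`. -/
def IsSubAut {A : Set (Cube n)} (ψ : A ≃o A) : Prop :=
  ∀ (x y : A), (y : Cube n) ≤ (x : Cube n) → ∀ h : delta ↑x ↑y ∈ A,
    (ψ ⟨delta ↑x ↑y, h⟩ : Cube n) = delta ↑(ψ x) ↑(ψ y)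

end Cube

/-!
An MR-subalgebra is determined by its coatoms: every `x ∈ A` is the meet of the coatoms of `A`
above it, and conversely the caret operation makes `A` closed under meets of coatoms with
disjoint supports. The coatoms come in antipodal pairs `a, Δ(𝟙, a)` with pairwise disjoint
supports, so reversing the signs of suitable coordinates brings them to the normal form
`⟨S, ∅⟩, ⟨∅, S⟩` for `S` in a family of disjoint blocks. The type counts the blocks of each size,
and two families of disjoint blocks with the same counts differ by a permutation of coordinates.
-/

open Function in
theorem Finset.exists_perm_map_eq_of_card_eq {α ι : Type*} [Finite α] (s t : ι → Finset α)
    (hs : Pairwise (Disjoint on s)) (ht : Pairwise (Disjoint on t))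
    (hcard : ∀ i, (s i).card = (t i).card) :
    ∃ p : Equiv.Perm α, ∀ i, (s i).map p.toEmbedding = t i := by
  classical
  have hs' : Pairwise (Disjoint on fun i => (s i : Set α)) :=
    fun i j hij => Finset.disjoint_coe.mpr (hs hij)
  have ht' : Pairwise (Disjoint on fun i => (t i : Set α)) :=
    fun i j hij => Finset.disjoint_coe.mpr (ht hij)
  let e : ↥(⋃ i, (s i : Set α)) ≃ ↥(⋃ i, (t i : Set α)) :=
    (Set.unionEqSigmaOfDisjoint hs').trans <|
      (Equiv.sigmaCongrRight fun i => Finset.equivOfCardEq (hcard i)).trans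
        (Set.unionEqSigmaOfDisjoint ht').symm
  refine ⟨e.extendSubtype, fun i => ?_⟩
  have hmaps : ∀ j ∈ s i, e.extendSubtype j ∈ t i := by
    intro j hj
    have hU : j ∈ ⋃ i, (s i : Set α) := Set.mem_iUnion.mpr ⟨i, hj⟩
    rw [Equiv.extendSubtype_apply_of_mem e j hU]
    set x := Set.unionEqSigmaOfDisjoint hs' ⟨j, hU⟩
    have hx : x.1 = i := by
      by_contra hne
      have hjx : j ∈ s x.1 := by
        simpa [x] using (x.2 : ↥(s x.1 : Set α)).2
      exact Finset.disjoint_left.mp (hs hne) hjx hj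
    have hmem : (e ⟨j, hU⟩ : α) ∈ t x.1 := (Finset.equivOfCardEq (hcard x.1) x.2).2
    rwa [hx] at hmem
  refine Finset.eq_of_subset_of_card_le ?_ (by rw [Finset.card_map, hcard])
  intro k hk
  obtain ⟨j, hj, rfl⟩ := Finset.mem_map.mp hk
  exact hmaps j hj

theorem Finset.exists_perm_image_map_eq {α : Type*} [Finite α] {F G : Set (Finset α)}
    (hF : F.PairwiseDisjoint id) (hG : G.PairwiseDisjoint id)
    (hcard : ∀ k, (F ∩ {S | S.card = k}).ncard = (G ∩ {S | S.card = k}).ncard) :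
    ∃ p : Equiv.Perm α, Finset.map p.toEmbedding '' F = G := by
  have hfiber : ∀ k, Nonempty ({S : F // S.1.card = k} ≃ {T : G // T.1.card = k}) := by
    intro k
    refine Finite.card_eq.mp ?_
    rw [Nat.card_congr (Equiv.subtypeSubtypeEquivSubtypeInter (· ∈ F) (·.card = k)),
      Nat.card_congr (Equiv.subtypeSubtypeEquivSubtypeInter (· ∈ G) (·.card = k))]
    exact (Nat.card_coe_set_eq _).trans ((hcard k).trans (Nat.card_coe_set_eq _).symm)
  let e : F ≃ G :=
    Equiv.ofFiberEquiv (f := fun S : F => S.1.card) (g := fun T : G => T.1.card)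
      fun k => (hfiber k).some
  obtain ⟨p, hp⟩ := exists_perm_map_eq_of_card_eq (fun S : F => S.1) (fun S => (e S).1)
    (fun S S' h => hF S.2 S'.2 (Subtype.val_injective.ne h))
    (fun S S' h => hG (e S).2 (e S').2 (Subtype.val_injective.ne (e.injective.ne h)))
    fun S => (Equiv.ofFiberEquiv_map (fun k => (hfiber k).some) S).symm
  refine ⟨p, Set.ext fun T => ⟨?_, fun hT => ⟨_, (e.symm ⟨T, hT⟩).2, ?_⟩⟩⟩
  · rintro ⟨S, hS, rfl⟩
    exact (hp ⟨S, hS⟩).symm ▸ (e ⟨S, hS⟩).2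
  · rw [hp (e.symm ⟨T, hT⟩), Equiv.apply_symm_apply]

namespace Cube

variable {n : ℕ}

open Finset Function

lemma le_iff {x y : Cube n} : x ≤ y ↔ y.pos ⊆ x.pos ∧ y.neg ⊆ x.neg := Iff.rfl

@[simp] lemma top_pos : (⊤ : Cube n).pos = ∅ := rfl
@[simp] lemma top_neg : (⊤ : Cube n).neg = ∅ := rfl
@[simp] lemma sup_pos (x y : Cube n) : (x ⊔ y).pos = x.pos ∩ y.pos := rfl
@[simp] lemma sup_neg (x y : Cube n) : (x ⊔ y).neg = x.neg ∩ y.neg := rfl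
@[simp] lemma delta_pos (x y : Cube n) : (delta x y).pos = x.pos ∪ (y.neg \ x.neg) := rfl
@[simp] lemma delta_neg (x y : Cube n) : (delta x y).neg = x.neg ∪ (y.pos \ x.pos) := rfl

instance : Finite (Cube n) :=
  Finite.of_injective (fun x => (x.pos, x.neg)) fun x y h => by
    simp only [Prod.mk.injEq] at h
    exact Cube.ext h.1 h.2

lemma sup_eq_top_iff {x y : Cube n} :
    x ⊔ y = ⊤ ↔ Disjoint x.pos y.pos ∧ Disjoint x.neg y.neg := by
  simp [Cube.ext_iff, disjoint_iff_inter_eq_empty]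

def supp (x : Cube n) : Finset (Fin n) := x.pos ∪ x.neg

lemma supp_eq_empty {x : Cube n} : supp x = ∅ ↔ x = ⊤ := by
  simp [supp, Cube.ext_iff]

lemma supp_subset_supp {x y : Cube n} (h : x ≤ y) : supp y ⊆ supp x :=
  union_subset_union h.1 h.2

lemma mem_pos_of_le {x y : Cube n} (h : x ≤ y) {j : Fin n} (hj : j ∈ x.pos)
    (hjy : j ∈ supp y) : j ∈ y.pos :=
  (mem_union.mp hjy).resolve_right fun hjn => disjoint_left.mp x.disj hj (h.2 hjn)

lemma mem_neg_of_le {x y : Cube n} (h : x ≤ y) {j : Fin n} (hj : j ∈ x.neg)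
    (hjy : j ∈ supp y) : j ∈ y.neg :=
  (mem_union.mp hjy).resolve_left fun hjp => disjoint_left.mp x.disj (h.1 hjp) hj

def antipode (x : Cube n) : Cube n := ⟨x.neg, x.pos, x.disj.symm⟩

@[simp] lemma antipode_pos (x : Cube n) : (antipode x).pos = x.neg := rfl
@[simp] lemma antipode_neg (x : Cube n) : (antipode x).neg = x.pos := rfl
@[simp] lemma antipode_antipode (x : Cube n) : antipode (antipode x) = x := rfl

@[simp] lemma antipode_eq_top {x : Cube n} : antipode x = ⊤ ↔ x = ⊤ := by
  simp [Cube.ext_iff, and_comm]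

lemma antipode_le_antipode {x y : Cube n} : antipode x ≤ antipode y ↔ x ≤ y := and_comm

@[simp] lemma supp_antipode (x : Cube n) : supp (antipode x) = supp x := union_comm _ _

lemma delta_top (y : Cube n) : delta ⊤ y = antipode y := by
  ext <;> simp

lemma disjoint_supp_iff {x y : Cube n} :
    Disjoint (supp x) (supp y) ↔ x ⊔ y = ⊤ ∧ x ⊔ antipode y = ⊤ := by
  simp only [sup_eq_top_iff, supp, disjoint_union_left, disjoint_union_right, antipode_pos,
    antipode_neg]
  tauto

lemma eq_top_of_le_of_le_antipode {x z : Cube n} (h : z ≤ x) (h' : z ≤ antipode x) :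
    x = ⊤ := by
  have hpos : x.pos = ∅ := disjoint_self.mp (z.disj.mono h.1 h'.2)
  have hneg : x.neg = ∅ := disjoint_self.mp (z.disj.mono h'.1 h.2)
  exact Cube.ext hpos hneg

def erase (x : Cube n) (s : Finset (Fin n)) : Cube n :=
  ⟨x.pos \ s, x.neg \ s, x.disj.mono sdiff_subset sdiff_subset⟩

lemma le_erase (x : Cube n) (s : Finset (Fin n)) : x ≤ erase x s :=
  ⟨sdiff_subset, sdiff_subset⟩

lemma supp_erase (x : Cube n) (s : Finset (Fin n)) : supp (erase x s) = supp x \ s :=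
  (union_sdiff_distrib _ _ _).symm

lemma sup_antipode_delta {x a : Cube n} (h : x ≤ a) :
    x ⊔ antipode (delta a x) = erase x (supp a) := by
  ext j
  · have := @h.2 j
    have : j ∈ x.pos → j ∉ x.neg := fun hj => disjoint_left.mp x.disj hj
    simp only [sup_pos, antipode_pos, delta_neg, erase, supp, mem_inter, mem_union, mem_sdiff]
    tauto
  · have := @h.1 j
    have : j ∈ x.pos → j ∉ x.neg := fun hj => disjoint_left.mp x.disj hj
    simp only [sup_neg, antipode_neg, delta_pos, erase, supp, mem_inter, mem_union, mem_sdiff]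
    tauto

def posFace (S : Finset (Fin n)) : Cube n := ⟨S, ∅, disjoint_empty_right S⟩

def negFace (S : Finset (Fin n)) : Cube n := ⟨∅, S, disjoint_empty_left S⟩

@[simp] lemma supp_posFace (S : Finset (Fin n)) : supp (posFace S) = S := union_empty S
@[simp] lemma supp_negFace (S : Finset (Fin n)) : supp (negFace S) = S := empty_union S
@[simp] lemma antipode_posFace (S : Finset (Fin n)) : antipode (posFace S) = negFace S := rfl

lemma posFace_injective : Function.Injective (posFace : Finset (Fin n) → Cube n) :=
  fun _ _ h => congrArg Cube.pos h

lemma negFace_injective : Function.Injective (negFace : Finset (Fin n) → Cube n) :=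
  fun _ _ h => congrArg Cube.neg h

lemma posFace_ne_negFace {S T : Finset (Fin n)} (hS : S ≠ ∅) : posFace S ≠ negFace T :=
  fun h => hS (congrArg Cube.pos h)

def flipFace (s : Finset (Fin n)) (x : Cube n) : Cube n :=
  ⟨x.pos \ s ∪ x.neg ∩ s, x.neg \ s ∪ x.pos ∩ s, by
    rw [disjoint_left]
    intro j hj hj'
    have : j ∈ x.pos → j ∉ x.neg := fun hj => disjoint_left.mp x.disj hj
    simp only [mem_union, mem_sdiff, mem_inter] at hj hj'
    tauto⟩

@[simp] lemma flipFace_pos (s : Finset (Fin n)) (x : Cube n) :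
    (flipFace s x).pos = x.pos \ s ∪ x.neg ∩ s := rfl
@[simp] lemma flipFace_neg (s : Finset (Fin n)) (x : Cube n) :
    (flipFace s x).neg = x.neg \ s ∪ x.pos ∩ s := rfl

lemma flipFace_involutive (s : Finset (Fin n)) : Function.Involutive (flipFace s) := by
  intro x
  ext j <;>
  · simp only [flipFace_pos, flipFace_neg, mem_union, mem_sdiff, mem_inter]
    tauto

lemma flipFace_mono (s : Finset (Fin n)) : Monotone (flipFace s) := by
  intro x y h
  constructor <;>
  · intro j
    have := @h.1 j
    have := @h.2 j
    simp only [flipFace_pos, flipFace_neg, mem_union, mem_sdiff, mem_inter]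
    tauto

def signFlip (s : Finset (Fin n)) : Cube n ≃o Cube n :=
  (Function.Involutive.toPerm _ (flipFace_involutive s)).toOrderIso
    (flipFace_mono s) (flipFace_mono s)

@[simp] lemma signFlip_apply (s : Finset (Fin n)) (x : Cube n) :
    signFlip s x = flipFace s x := rfl

lemma supp_signFlip (s : Finset (Fin n)) (x : Cube n) : supp (signFlip s x) = supp x := by
  ext j
  simp only [signFlip_apply, supp, flipFace_pos, flipFace_neg, mem_union, mem_sdiff, mem_inter]
  tauto

lemma signFlip_antipode (s : Finset (Fin n)) (x : Cube n) :
    signFlip s (antipode x) = antipode (signFlip s x) := rfl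

lemma signFlip_eq_posFace {s : Finset (Fin n)} {x : Cube n}
    (h : ∀ j ∈ supp x, j ∈ s ↔ j ∈ x.neg) : signFlip s x = posFace (supp x) := by
  have hd : ∀ j, j ∈ x.pos → j ∉ x.neg := fun j hj => disjoint_left.mp x.disj hj
  ext j
  · have := h j
    simp only [signFlip_apply, flipFace_pos, posFace, supp, mem_union, mem_sdiff,
      mem_inter] at this ⊢
    have := hd j
    tauto
  · have := h j
    simp only [signFlip_apply, flipFace_neg, posFace, supp, mem_union, mem_sdiff, mem_inter,
      notMem_empty] at this ⊢
    have := hd j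
    tauto

def relabel (p : Equiv.Perm (Fin n)) : Cube n ≃o Cube n where
  toFun x := ⟨x.pos.map p.toEmbedding, x.neg.map p.toEmbedding,
    (disjoint_map p.toEmbedding).mpr x.disj⟩
  invFun x := ⟨x.pos.map p.symm.toEmbedding, x.neg.map p.symm.toEmbedding,
    (disjoint_map p.symm.toEmbedding).mpr x.disj⟩
  left_inv x := by ext <;> simp [map_map]
  right_inv x := by ext <;> simp [map_map]
  map_rel_iff' := by simp [le_iff]

@[simp] lemma relabel_pos (p : Equiv.Perm (Fin n)) (x : Cube n) :
    (relabel p x).pos = x.pos.map p.toEmbedding := rfl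
@[simp] lemma relabel_neg (p : Equiv.Perm (Fin n)) (x : Cube n) :
    (relabel p x).neg = x.neg.map p.toEmbedding := rfl

lemma relabel_posFace (p : Equiv.Perm (Fin n)) (S : Finset (Fin n)) :
    relabel p (posFace S) = posFace (S.map p.toEmbedding) := by
  ext <;> simp [posFace]

lemma relabel_negFace (p : Equiv.Perm (Fin n)) (S : Finset (Fin n)) :
    relabel p (negFace S) = negFace (S.map p.toEmbedding) := by
  ext <;> simp [negFace]

lemma isAut_signFlip (s : Finset (Fin n)) : IsAut (signFlip s) := by
  intro x y _
  ext j <;>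
  · simp only [signFlip_apply, flipFace_pos, flipFace_neg, delta_pos, delta_neg, mem_union,
      mem_sdiff, mem_inter]
    tauto

lemma isAut_relabel (p : Equiv.Perm (Fin n)) : IsAut (relabel p) := by
  intro x y _
  ext <;> simp [Finset.map_union, Finset.map_sdiff]

lemma IsAut.trans {φ ψ : Cube n ≃o Cube n} (hφ : IsAut φ) (hψ : IsAut ψ) :
    IsAut (φ.trans ψ) := by
  intro x y h
  simp only [OrderIso.trans_apply, hφ x y h, hψ (φ x) (φ y) (φ.monotone h)]

lemma IsAut.symm {φ : Cube n ≃o Cube n} (hφ : IsAut φ) : IsAut φ.symm := by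
  intro x y h
  apply φ.injective
  rw [hφ _ _ (φ.symm.monotone h)]
  simp

lemma isGLB_coe_finset_iff {t : Finset (Cube n)} {w : Cube n} :
    IsGLB (t : Set (Cube n)) w ↔ w.pos = t.biUnion pos ∧ w.neg = t.biUnion neg := by
  constructor
  · intro h
    have hp : t.biUnion pos ⊆ w.pos := biUnion_subset.mpr fun a ha => (h.1 ha).1
    have hn : t.biUnion neg ⊆ w.neg := biUnion_subset.mpr fun a ha => (h.1 ha).2
    have hv : (⟨_, _, w.disj.mono hp hn⟩ : Cube n) ≤ w :=
      h.2 fun a ha => ⟨subset_biUnion_of_mem pos ha, subset_biUnion_of_mem neg ha⟩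
    exact ⟨hv.1.antisymm hp, hv.2.antisymm hn⟩
  · rintro ⟨hp, hn⟩
    refine ⟨fun a ha => ⟨?_, ?_⟩, fun v hv => ⟨?_, ?_⟩⟩
    · exact hp ▸ subset_biUnion_of_mem pos ha
    · exact hn ▸ subset_biUnion_of_mem neg ha
    · exact hp ▸ biUnion_subset.mpr fun a ha => (hv ha).1
    · exact hn ▸ biUnion_subset.mpr fun a ha => (hv ha).2

lemma exists_mem_coAt_ge {A : Set (Cube n)} {x : Cube n} (hx : x ∈ A) (hxt : x ≠ ⊤) :
    ∃ a ∈ coAt A, x ≤ a := by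
  obtain ⟨a, ⟨haA, hxa, hat⟩, hmax⟩ :=
    (Set.toFinite {y | y ∈ A ∧ x ≤ y ∧ y ≠ ⊤}).exists_maximal ⟨x, hx, le_rfl, hxt⟩
  exact ⟨a, ⟨haA, hat, fun b hb hbt hab => (hmax ⟨hb, hxa.trans hab, hbt⟩ hab).antisymm hab⟩,
    hxa⟩

namespace IsMRSub

variable {A : Set (Cube n)} {a b x : Cube n}

lemma antipode_mem (hA : IsMRSub A) (hx : x ∈ A) : antipode x ∈ A := by
  simpa [delta_top] using hA.2.2.1 ⊤ hA.1 x hx le_top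

lemma antipode_mem_coAt (hA : IsMRSub A) (ha : a ∈ coAt A) : antipode a ∈ coAt A := by
  obtain ⟨haA, hat, hmax⟩ := ha
  refine ⟨hA.antipode_mem haA, antipode_eq_top.not.mpr hat, fun b hb hbt hab => ?_⟩
  have := hmax (antipode b) (hA.antipode_mem hb) (antipode_eq_top.not.mpr hbt)
    (by rwa [← antipode_le_antipode, antipode_antipode])
  rw [← this, antipode_antipode]

lemma sup_eq_top (hA : IsMRSub A) (ha : a ∈ coAt A) (hb : b ∈ coAt A) (hab : a ≠ b) :
    a ⊔ b = ⊤ := by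
  by_contra h
  have hsup : a ⊔ b = a := ha.2.2 _ (hA.2.1 a ha.1 b hb.1) h le_sup_left
  exact hab (hb.2.2 a ha.1 ha.2.1 (hsup ▸ le_sup_right))

lemma disjoint_supp (hA : IsMRSub A) (ha : a ∈ coAt A) (hb : b ∈ coAt A) (hab : a ≠ b)
    (hab' : b ≠ antipode a) : Disjoint (supp a) (supp b) :=
  disjoint_supp_iff.mpr ⟨hA.sup_eq_top ha hb hab,
    hA.sup_eq_top ha (hA.antipode_mem_coAt hb) fun h => hab' (by rw [h, antipode_antipode])⟩

lemma eq_or_eq_antipode_of_supp_eq (hA : IsMRSub A) (ha : a ∈ coAt A) (hb : b ∈ coAt A)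
    (h : supp a = supp b) : b = a ∨ b = antipode a := by
  by_contra! hne
  have hd := hA.disjoint_supp ha hb hne.1.symm hne.2
  rw [h, disjoint_self, bot_eq_empty, supp_eq_empty] at hd
  exact hb.2.1 hd

lemma disjoint_supp_of_le (hA : IsMRSub A) (ha : a ∈ coAt A) (hb : b ∈ coAt A) (hab : a ≠ b)
    (hxa : x ≤ a) (hxb : x ≤ b) : Disjoint (supp a) (supp b) :=
  hA.disjoint_supp ha hb hab fun h => ha.2.1 (eq_top_of_le_of_le_antipode hxa (h ▸ hxb))

lemma pairwiseDisjoint_supp (hA : IsMRSub A) : (supp '' coAt A).PairwiseDisjoint id := by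
  rintro _ ⟨a, ha, rfl⟩ _ ⟨b, hb, rfl⟩ hne
  exact hA.disjoint_supp ha hb (fun h => hne (h ▸ rfl))
    fun h => hne (by rw [h, supp_antipode])

lemma erase_mem (hA : IsMRSub A) (hx : x ∈ A) (ha : a ∈ A) (hxa : x ≤ a) :
    erase x (supp a) ∈ A := by
  rw [← sup_antipode_delta hxa]
  exact hA.2.1 x hx _ (hA.antipode_mem (hA.2.2.1 a ha x hx hxa))

lemma exists_mem_coAt_ge_mem_supp (hA : IsMRSub A) (hx : x ∈ A) {j : Fin n}
    (hj : j ∈ supp x) : ∃ c ∈ coAt A, x ≤ c ∧ j ∈ supp c := by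
  obtain ⟨a, ⟨haA, hxa, hja⟩, hmax⟩ :=
    (Set.toFinite {y | y ∈ A ∧ x ≤ y ∧ j ∈ supp y}).exists_maximal ⟨x, hx, le_rfl, hj⟩
  have hat : a ≠ ⊤ := by
    rintro rfl
    simp [supp] at hja
  obtain ⟨c, hc, hac⟩ := exists_mem_coAt_ge haA hat
  refine ⟨c, hc, hxa.trans hac, ?_⟩
  by_contra hjc
  apply hc.2.1
  -- otherwise erasing `supp c` from `a` keeps `j`, so by maximality it does not move `a`
  have hle := le_erase a (supp c)
  have heq : erase a (supp c) = a := (hmax ⟨hA.erase_mem haA hc.1 hac, hxa.trans hle,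
    by simpa [supp_erase] using ⟨hja, hjc⟩⟩ hle).antisymm hle
  have hd : Disjoint (supp a) (supp c) := by
    rw [← Finset.sdiff_eq_self_iff_disjoint, ← supp_erase, heq]
  exact supp_eq_empty.mp (hd.symm.eq_bot_of_le (supp_subset_supp hac))

lemma isGLB_coAt_inter_Ici (hA : IsMRSub A) (hx : x ∈ A) : IsGLB (coAt A ∩ Set.Ici x) x := by
  refine ⟨fun a ha => ha.2, fun v hv => ⟨fun j hj => ?_, fun j hj => ?_⟩⟩
  · obtain ⟨c, hc, hxc, hjc⟩ := hA.exists_mem_coAt_ge_mem_supp hx (mem_union_left _ hj)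
    exact (hv ⟨hc, hxc⟩).1 (mem_pos_of_le hxc hj hjc)
  · obtain ⟨c, hc, hxc, hjc⟩ := hA.exists_mem_coAt_ge_mem_supp hx (mem_union_right _ hj)
    exact (hv ⟨hc, hxc⟩).2 (mem_neg_of_le hxc hj hjc)

lemma exists_isGLB_pair (hA : IsMRSub A) (ha : a ∈ A) (hb : b ∈ A)
    (h : Disjoint (supp a) (supp b)) : ∃ w ∈ A, IsGLB {a, b} w := by
  obtain ⟨w, hw, hglb⟩ := hA.2.2.2 a ha (antipode b) (hA.antipode_mem hb)
  rw [(disjoint_supp_iff.mp h).2, delta_top, antipode_antipode] at hglb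
  exact ⟨w, hw, hglb⟩

lemma exists_isGLB_finset (hA : IsMRSub A) (t : Finset (Cube n)) (ht : ↑t ⊆ A)
    (hdisj : (t : Set (Cube n)).Pairwise (Disjoint on supp)) :
    ∃ w ∈ A, IsGLB (t : Set (Cube n)) w := by
  classical
  induction t using Finset.induction_on with
  | empty => exact ⟨⊤, hA.1, isGLB_coe_finset_iff.mpr ⟨rfl, rfl⟩⟩
  | insert a s has ih =>
    rw [coe_insert, Set.insert_subset_iff] at ht
    rw [coe_insert, Set.pairwise_insert] at hdisj
    obtain ⟨w, hw, hglb⟩ := ih ht.2 hdisj.1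
    rw [isGLB_coe_finset_iff] at hglb
    have hsa : ∀ b ∈ s, Disjoint (supp b) (supp a) :=
      fun b hb => (hdisj.2 b hb (ne_of_mem_of_not_mem hb has).symm).2
    have hwa : Disjoint (supp w) (supp a) := by
      simp only [supp, hglb, disjoint_union_left, disjoint_biUnion_left]
      exact ⟨fun b hb => (hsa b hb).mono_left subset_union_left,
        fun b hb => (hsa b hb).mono_left subset_union_right⟩
    obtain ⟨w', hw', hglb'⟩ := hA.exists_isGLB_pair hw ht.1 hwa
    rw [← coe_pair, isGLB_coe_finset_iff] at hglb'
    refine ⟨w', hw', isGLB_coe_finset_iff.mpr ?_⟩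
    simp [hglb', hglb, union_comm]

lemma mem_iff_isGLB (hA : IsMRSub A) : x ∈ A ↔ IsGLB (coAt A ∩ Set.Ici x) x := by
  refine ⟨hA.isGLB_coAt_inter_Ici, fun hx => ?_⟩
  have hfin := Set.toFinite (coAt A ∩ Set.Ici x)
  obtain ⟨w, hw, hglb⟩ := hA.exists_isGLB_finset hfin.toFinset
    (by rw [hfin.coe_toFinset]; exact fun a ha => ha.1.1)
    (by
      rw [hfin.coe_toFinset]
      exact fun a ha b hb hab => hA.disjoint_supp_of_le ha.1 hb.1 hab ha.2 hb.2)
  rw [hfin.coe_toFinset] at hglb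
  rwa [hx.unique hglb]

end IsMRSub

theorem image_eq_of_image_coAt_eq {A B : Set (Cube n)} (φ : Cube n ≃o Cube n)
    (hA : IsMRSub A) (hB : IsMRSub B) (h : φ '' coAt A = coAt B) : φ '' A = B := by
  ext y
  obtain ⟨x, rfl⟩ := φ.surjective y
  rw [φ.injective.mem_set_image, hA.mem_iff_isGLB, hB.mem_iff_isGLB, ← h, ← φ.image_Ici,
    ← Set.image_inter φ.injective, φ.isGLB_image']

lemma coatomsAbove_eq (a : Cube n) :
    coatomsAbove a = (fun j => posFace {j}) '' a.pos ∪ (fun j => negFace {j}) '' a.neg := by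
  ext c
  simp only [coatomsAbove, corank, Set.mem_ofPred_eq, Set.mem_union, Set.mem_image,
    Finset.mem_coe]
  constructor
  · rintro ⟨hc, hac⟩
    obtain ⟨j, hj⟩ := card_eq_one.mp hc
    have hpos := subset_singleton_iff.mp (hj ▸ subset_union_left : c.pos ⊆ {j})
    have hneg := subset_singleton_iff.mp (hj ▸ subset_union_right : c.neg ⊆ {j})
    rcases hpos with hpos | hpos <;> rcases hneg with hneg | hneg
    · simp [hpos, hneg] at hj
    · exact Or.inr ⟨j, hac.2 (by simp [hneg]), Cube.ext hpos.symm hneg.symm⟩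
    · exact Or.inl ⟨j, hac.1 (by simp [hpos]), Cube.ext hpos.symm hneg.symm⟩
    · simpa [hpos, hneg] using c.disj
  · rintro (⟨j, hj, rfl⟩ | ⟨j, hj, rfl⟩)
    · exact ⟨rfl, singleton_subset_iff.mpr hj, empty_subset _⟩
    · exact ⟨rfl, empty_subset _, singleton_subset_iff.mpr hj⟩

lemma ncard_coatomsAbove (a : Cube n) : (coatomsAbove a).ncard = (supp a).card := by
  have hdisj : Disjoint ((fun j => posFace {j}) '' (a.pos : Set (Fin n)))
      ((fun j => negFace {j}) '' (a.neg : Set (Fin n))) := by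
    rw [Set.disjoint_left]
    rintro _ ⟨j, -, rfl⟩ ⟨k, -, h⟩
    exact posFace_ne_negFace (singleton_ne_empty j) h.symm
  rw [coatomsAbove_eq, Set.ncard_union_eq hdisj,
    Set.ncard_image_of_injective (f := fun j => posFace {j}) _
      (posFace_injective.comp singleton_injective),
    Set.ncard_image_of_injective (f := fun j => negFace {j}) _
      (negFace_injective.comp singleton_injective),
    Set.ncard_coe_finset, Set.ncard_coe_finset, supp, card_union_of_disjoint a.disj]

lemma typeSet_eq (A : Set (Cube n)) (i : ℕ) :
    typeSet A i = coAt A ∩ supp ⁻¹' {S | S.card = i} := by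
  ext a
  simp [typeSet, ncard_coatomsAbove]

/-- The coatoms of an MR-subalgebra in normal form. -/
def signedBlocks (F : Set (Finset (Fin n))) : Set (Cube n) := posFace '' F ∪ negFace '' F

lemma relabel_image_signedBlocks (p : Equiv.Perm (Fin n)) (F : Set (Finset (Fin n))) :
    relabel p '' signedBlocks F = signedBlocks (map p.toEmbedding '' F) := by
  simp only [signedBlocks, Set.image_union, Set.image_image, relabel_posFace, relabel_negFace]

lemma signedBlocks_inter_preimage_supp (F P : Set (Finset (Fin n))) :
    signedBlocks F ∩ supp ⁻¹' P = signedBlocks (F ∩ P) := by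
  simp only [signedBlocks, Set.union_inter_distrib_right, ← Set.image_inter_preimage,
    Set.preimage_preimage, supp_posFace, supp_negFace, Set.preimage_id']

lemma ncard_signedBlocks {F : Set (Finset (Fin n))} (hF : ∅ ∉ F) :
    (signedBlocks F).ncard = 2 * F.ncard := by
  have hdisj : Disjoint (posFace '' F) (negFace '' F) := by
    rw [Set.disjoint_left]
    rintro _ ⟨S, hS, rfl⟩ ⟨T, -, h⟩
    exact posFace_ne_negFace (fun h' => hF (h' ▸ hS)) h.symm
  rw [signedBlocks, Set.ncard_union_eq hdisj, Set.ncard_image_of_injective _ posFace_injective,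
    Set.ncard_image_of_injective _ negFace_injective, two_mul]

namespace IsMRSub

variable {A : Set (Cube n)}

lemma exists_signFlip_image_coAt (hA : IsMRSub A) :
    ∃ s, signFlip s '' coAt A = signedBlocks (supp '' coAt A) := by
  classical
  have : Nonempty (Cube n) := ⟨⊤⟩
  choose! rep hrep hsupp using fun S (hS : S ∈ supp '' coAt A) => hS
  let s : Finset (Fin n) := univ.filter fun j => ∃ S ∈ supp '' coAt A, j ∈ (rep S).neg
  have hflip : ∀ S ∈ supp '' coAt A, signFlip s (rep S) = posFace S := by
    intro S hS
    rw [signFlip_eq_posFace, hsupp S hS]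
    intro j hj
    simp only [s, mem_filter, mem_univ, true_and]
    refine ⟨fun ⟨T, hT, hjT⟩ => ?_, fun h => ⟨S, hS, h⟩⟩
    obtain rfl : T = S := by
      by_contra hne
      refine disjoint_left.mp (hA.pairwiseDisjoint_supp hT hS hne) ?_ (hsupp S hS ▸ hj)
      exact hsupp T hT ▸ mem_union_right _ hjT
    exact hjT
  refine ⟨s, Set.ext fun x => ?_⟩
  constructor
  · rintro ⟨a, ha, rfl⟩
    have hS : supp a ∈ supp '' coAt A := ⟨a, ha, rfl⟩
    rcases hA.eq_or_eq_antipode_of_supp_eq (hrep _ hS) ha (hsupp _ hS) with h | h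
    · exact Or.inl ⟨supp a, hS, by rw [← hflip _ hS, ← h]⟩
    · exact Or.inr ⟨supp a, hS, by
        rw [← antipode_posFace, ← hflip _ hS, ← signFlip_antipode, ← h]⟩
  · rintro (⟨S, hS, rfl⟩ | ⟨S, hS, rfl⟩)
    · exact ⟨rep S, hrep S hS, hflip S hS⟩
    · exact ⟨antipode (rep S), hA.antipode_mem_coAt (hrep S hS),
        by rw [signFlip_antipode, hflip S hS, antipode_posFace]⟩

lemma ncard_typeSet (hA : IsMRSub A) (i : ℕ) :
    (typeSet A i).ncard = 2 * (supp '' coAt A ∩ {S | S.card = i}).ncard := by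
  obtain ⟨s, hs⟩ := hA.exists_signFlip_image_coAt
  have hpre : supp ⁻¹' {S : Finset (Fin n) | S.card = i} =
      signFlip s ⁻¹' (supp ⁻¹' {S | S.card = i}) := by
    ext x
    simp only [Set.mem_preimage, supp_signFlip]
  rw [← Set.ncard_image_of_injective _ (signFlip s).injective, typeSet_eq, hpre,
    Set.image_inter_preimage, hs, signedBlocks_inter_preimage_supp,
    ncard_signedBlocks]
  rintro ⟨⟨a, ha, hsupp⟩, -⟩
  exact ha.2.1 (supp_eq_empty.mp hsupp)

end IsMRSub

end Cube

/-- Two MR-subalgebras of `𝓛ₙ` of the same type lie in the same orbit of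
`Aut(𝓛ₙ)`. -/
theorem same_type_same_orbit (n : ℕ) (A B : Set (Cube n))
    (hA : Cube.IsMRSub A) (hB : Cube.IsMRSub B)
    (htp : ∀ i, (Cube.typeSet A i).ncard = (Cube.typeSet B i).ncard) :
    ∃ φ ∈ Cube.AutSet n, φ '' A = B := by
  obtain ⟨s, hs⟩ := hA.exists_signFlip_image_coAt
  obtain ⟨t, ht⟩ := hB.exists_signFlip_image_coAt
  obtain ⟨p, hp⟩ := Finset.exists_perm_image_map_eq hA.pairwiseDisjoint_supp
    hB.pairwiseDisjoint_supp fun i => by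
      have := htp i
      rw [hA.ncard_typeSet, hB.ncard_typeSet] at this
      omega
  refine ⟨(Cube.signFlip s).trans ((Cube.relabel p).trans (Cube.signFlip t).symm),
    (Cube.isAut_signFlip s).trans ((Cube.isAut_relabel p).trans (Cube.isAut_signFlip t).symm),
    Cube.image_eq_of_image_coAt_eq _ hA hB ?_⟩
  rw [OrderIso.coe_trans, OrderIso.coe_trans, Set.image_comp, Set.image_comp, hs,
    Cube.relabel_image_signedBlocks, hp, ← ht, OrderIso.symm_image_image]
end

section
/- Let L be a finite MR-algebra with top element 1, and let φ be a bijection of the set of coatoms of L satisfying φ(Δ(1,c)) = Δ(1, φ(c)) for every coatom c. Then there exists an automorphism Φ of L (an order automorphism with Φ(Δ(x,y)) = Δ(Φ(x), Φ(y)) whenever y ≤ x) such that Φ(c) = φ(c) for every coatom c. -/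
/-- The derived binary operation `xy := Δ(1, Δ(x ∨ y, y)) ∨ y` of a cubic
algebra. -/
def cop {L : Type*} [SemilatticeSup L] [OrderTop L] (Δ : L → L → L) (x y : L) : L :=
  Δ ⊤ (Δ (x ⊔ y) y) ⊔ y

/-- A cubic algebra: a join-semilattice with top, with a reflection operation
`Δ` satisfying the axioms (a)–(f). -/
structure CubicAlgebra (L : Type*) [SemilatticeSup L] [OrderTop L] where
  Δ : L → L → L
  ax_a : ∀ x y : L, y ≤ x → Δ x y ⊔ y = x
  ax_b : ∀ x y z : L, z ≤ y → y ≤ x → Δ x (Δ y z) = Δ (Δ x y) (Δ x z)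
  ax_c : ∀ x y : L, y ≤ x → Δ x (Δ x y) = y
  ax_d : ∀ x y z : L, z ≤ y → y ≤ x → Δ x z ≤ Δ x y
  ax_e : ∀ x y : L, cop Δ (cop Δ x y) y = x ⊔ y
  ax_f : ∀ x y z : L, cop Δ x (cop Δ y z) = cop Δ y (cop Δ x z)

/-- The Metropolis–Rota axiom: for `a, b < x`, `Δ(x,a) ∨ b < x` iff `a` and `b`
have no greatest lower bound. -/
def CubicAlgebra.IsMR {L : Type*} [SemilatticeSup L] [OrderTop L]
    (C : CubicAlgebra L) : Prop :=
  ∀ a b x : L, a < x → b < x → (C.Δ x a ⊔ b < x ↔ ¬∃ m : L, IsGLB {a, b} m)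

/-!
In a finite MR-algebra an element `x` is determined by the set `coatomsAbove x` of coatoms
above it: `x ≤ y` iff `coatomsAbove y ⊆ coatomsAbove x`. The sets of this form are exactly the
sets of coatoms containing no pair `c, Δ(1,c)`: such a set is realised by adjoining its coatoms
one at a time through greatest lower bounds, since the glb of `a` and `b` lies below exactly the
coatoms above `a` or `b`. In these coordinates `Δ(x,y)` has coatom set
`coatomsAbove x ∪ Δ(1, coatomsAbove y \ coatomsAbove x)`. So a bijection `φ` of the coatoms
commuting with `Δ(1,·)` carries realisable sets to realisable sets; `Φ x` is the element whose
coatom set is `φ '' coatomsAbove x`, and it respects `≤` and `Δ` because both are read off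
from coatom sets.
-/

theorem exists_isGLB_of_bddBelow {α : Type*} [SemilatticeSup α] [Finite α] {s : Set α}
    (h : BddBelow s) : ∃ m, IsGLB s m := by
  obtain ⟨m, hm⟩ := (lowerBounds s).toFinite.exists_maximal h
  refine ⟨m, hm.prop, fun w hw => ?_⟩
  have hwm : w ⊔ m ∈ lowerBounds s := fun a ha => sup_le (hw ha) (hm.prop ha)
  exact le_sup_left.trans (hm.le_of_ge hwm le_sup_right)

theorem exists_isGLB_pair_iff {α : Type*} [SemilatticeSup α] [Finite α] {a b : α} :
    (∃ m, IsGLB {a, b} m) ↔ ∃ z, z ≤ a ∧ z ≤ b := by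
  constructor
  · rintro ⟨m, hm⟩
    exact ⟨m, hm.1 (by simp), hm.1 (by simp)⟩
  · rintro ⟨z, hza, hzb⟩
    exact exists_isGLB_of_bddBelow ⟨z, by simp [hza, hzb]⟩

theorem IsCoatom.sup_eq_top_iff {α : Type*} [SemilatticeSup α] [OrderTop α] {c w : α}
    (hc : IsCoatom c) : w ⊔ c = ⊤ ↔ ¬w ≤ c :=
  ⟨fun h hw => hc.1 (by rwa [sup_eq_right.2 hw] at h),
    fun h => (hc.le_iff.1 le_sup_right).resolve_right (mt sup_eq_right.1 h)⟩

section coatomsAbove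

variable {α : Type*} [PartialOrder α] [OrderTop α]

def coatomsAbove (x : α) : Set α := {c | IsCoatom c ∧ x ≤ c}

theorem coatomsAbove_subset (x : α) : coatomsAbove x ⊆ {c | IsCoatom c} := fun _ hc => hc.1

theorem coatomsAbove_antitone : Antitone (coatomsAbove : α → Set α) :=
  fun _ _ hxy _ hc => ⟨hc.1, hxy.trans hc.2⟩

theorem coatomsAbove_top : coatomsAbove (⊤ : α) = ∅ :=
  Set.eq_empty_of_forall_notMem fun _ hc => hc.1.1 (top_le_iff.1 hc.2)

theorem coatomsAbove_of_isCoatom {c : α} (hc : IsCoatom c) : coatomsAbove c = {c} := by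
  ext d
  refine ⟨fun hd => (hc.le_iff.1 hd.2).resolve_left hd.1.1, ?_⟩
  rintro rfl
  exact ⟨hc, le_rfl⟩

end coatomsAbove

namespace CubicAlgebra

variable {L : Type*} [SemilatticeSup L] [OrderTop L] (C : CubicAlgebra L)

theorem delta_le {x y : L} (h : y ≤ x) : C.Δ x y ≤ x :=
  le_sup_left.trans_eq (C.ax_a x y h)

theorem delta_self (x : L) : C.Δ x x = x := by
  refine (C.delta_le le_rfl).antisymm ?_
  simpa only [C.ax_c x x le_rfl] using C.ax_d x x _ (C.delta_le le_rfl) le_rfl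

def reflectTop : L ≃o L where
  toFun := C.Δ ⊤
  invFun := C.Δ ⊤
  left_inv a := C.ax_c ⊤ a le_top
  right_inv a := C.ax_c ⊤ a le_top
  map_rel_iff' {a b} := by
    refine ⟨fun h => ?_, fun h => C.ax_d ⊤ b a h le_top⟩
    change C.Δ ⊤ a ≤ C.Δ ⊤ b at h
    have := C.ax_d ⊤ _ _ h le_top
    rwa [C.ax_c ⊤ a le_top, C.ax_c ⊤ b le_top] at this

theorem delta_top_mono {a b : L} (h : a ≤ b) : C.Δ ⊤ a ≤ C.Δ ⊤ b :=
  C.reflectTop.monotone h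

theorem delta_top_le_iff {a b : L} : C.Δ ⊤ a ≤ b ↔ a ≤ C.Δ ⊤ b :=
  C.reflectTop.symm_apply_le

theorem isCoatom_delta_top {c : L} (hc : IsCoatom c) : IsCoatom (C.Δ ⊤ c) :=
  (C.reflectTop.isCoatom_iff c).2 hc

variable {C} [Finite L]

theorem sup_delta_eq_iff (hMR : C.IsMR) {a b x : L} (ha : a ≤ x) (hb : b ≤ x) :
    C.Δ x a ⊔ b = x ↔ ∃ z, z ≤ a ∧ z ≤ b := by
  rcases ha.eq_or_lt with rfl | hax
  · rw [C.delta_self, sup_eq_left.2 hb]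
    exact iff_of_true rfl ⟨b, hb, le_rfl⟩
  rcases hb.eq_or_lt with rfl | hbx
  · rw [sup_eq_right.2 (C.delta_le ha)]
    exact iff_of_true rfl ⟨a, le_rfl, ha⟩
  rw [← not_iff_not, ← ne_eq, ← (sup_le (C.delta_le ha) hb).lt_iff_ne, hMR a b x hax hbx,
    exists_isGLB_pair_iff]

theorem not_exists_lb_delta (hMR : C.IsMR) {x y : L} (h : y < x) :
    ¬∃ z, z ≤ C.Δ x y ∧ z ≤ y := by
  rw [← sup_delta_eq_iff hMR (C.delta_le h.le) h.le, C.ax_c x y h.le, sup_idem]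
  exact h.ne

theorem exists_lb_iff_not_le_delta_top (hMR : C.IsMR) {u c : L} (hc : IsCoatom c) :
    (∃ z, z ≤ u ∧ z ≤ c) ↔ ¬u ≤ C.Δ ⊤ c := by
  rw [← sup_delta_eq_iff hMR le_top le_top, ← C.delta_top_le_iff, hc.sup_eq_top_iff]

theorem exists_isCoatom_le_not_le (hMR : C.IsMR) {x y : L} (h : x < y) :
    ∃ c, IsCoatom c ∧ x ≤ c ∧ ¬y ≤ c := by
  have hxu := not_exists_lb_delta hMR h
  have hne : C.Δ ⊤ x ⊔ C.Δ y x ≠ ⊤ := fun he =>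
    hxu (by simpa only [and_comm] using (sup_delta_eq_iff hMR le_top le_top).1 he)
  obtain ⟨c, hc, hge⟩ := (eq_top_or_exists_le_coatom _).resolve_left hne
  refine ⟨C.Δ ⊤ c, C.isCoatom_delta_top hc, C.delta_top_le_iff.1 (le_sup_left.trans hge),
    fun hy => not_exists_lb_delta hMR hc.lt_top ⟨C.Δ y x, ?_, le_sup_right.trans hge⟩⟩
  exact (C.delta_le h.le).trans hy

theorem le_iff_coatomsAbove_subset (hMR : C.IsMR) {x y : L} :
    x ≤ y ↔ coatomsAbove y ⊆ coatomsAbove x := by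
  refine ⟨fun h => coatomsAbove_antitone h, fun h => ?_⟩
  by_contra hxy
  obtain ⟨c, hc, hyc, hc'⟩ := exists_isCoatom_le_not_le hMR (left_lt_sup.2 hxy)
  exact hc' (sup_le hyc (h ⟨hc, hyc⟩).2)

theorem coatomsAbove_injective (hMR : C.IsMR) : Function.Injective (coatomsAbove : L → Set L) :=
  fun _ _ h => le_antisymm ((le_iff_coatomsAbove_subset hMR).2 h.ge)
    ((le_iff_coatomsAbove_subset hMR).2 h.le)

theorem delta_le_delta_top_of_not_le (hMR : C.IsMR) {x y c : L} (hc : IsCoatom c)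
    (hyx : y ≤ x) (hyc : y ≤ c) (hxc : ¬x ≤ c) : C.Δ x y ≤ C.Δ ⊤ c := by
  obtain ⟨m, hm⟩ := exists_isGLB_pair_iff.2 ⟨y, hyx, hyc⟩
  have hmx : m ≤ x := hm.1 (by simp)
  have hmc : m ≤ c := hm.1 (by simp)
  have hym : y ≤ m := hm.2 (by simp [hyx, hyc])
  have hmlt : m < x := hmx.lt_of_ne fun he => hxc (he ▸ hmc)
  refine (C.ax_d x m y hym hmx).trans ?_
  by_contra hnle
  obtain ⟨t, htx, htc⟩ := (exists_lb_iff_not_le_delta_top hMR hc).2 hnle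
  exact not_exists_lb_delta hMR hmlt
    ⟨t, htx, hm.2 (by simp [htx.trans (C.delta_le hmx), htc])⟩

theorem coatomsAbove_delta (hMR : C.IsMR) {x y : L} (h : y ≤ x) :
    coatomsAbove (C.Δ x y) = coatomsAbove x ∪ C.Δ ⊤ '' (coatomsAbove y \ coatomsAbove x) := by
  ext c
  constructor
  · intro ⟨hc, hdc⟩
    refine or_iff_not_imp_left.2 fun hcx =>
      ⟨C.Δ ⊤ c, ⟨⟨C.isCoatom_delta_top hc, ?_⟩, ?_⟩, C.ax_c ⊤ c le_top⟩
    · simpa only [C.ax_c x y h] using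
        delta_le_delta_top_of_not_le hMR hc (C.delta_le h) hdc fun hxc => hcx ⟨hc, hxc⟩
    · exact fun hx =>
        not_exists_lb_delta hMR hc.lt_top ⟨C.Δ x y, (C.delta_le h).trans hx.2, hdc⟩
  · rintro (hcx | ⟨d, ⟨⟨hd, hyd⟩, hdx⟩, rfl⟩)
    · exact ⟨hcx.1, (C.delta_le h).trans hcx.2⟩
    · exact ⟨C.isCoatom_delta_top hd,
        delta_le_delta_top_of_not_le hMR hd h hyd fun hxd => hdx ⟨hd, hxd⟩⟩

theorem delta_top_delta_le_of_not_le (hMR : C.IsMR) {d m a : L} (hd : IsCoatom d)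
    (hmd : m ≤ d) (hma : m ≤ a) (had : ¬a ≤ d) : C.Δ ⊤ (C.Δ d m) ≤ a := by
  refine (le_iff_coatomsAbove_subset hMR).2 fun e ⟨he, hae⟩ => ⟨he, ?_⟩
  have hde : ¬d ≤ e := fun hde => had (hae.trans_eq ((hd.le_iff.1 hde).resolve_left he.1))
  exact C.delta_top_le_iff.2 (delta_le_delta_top_of_not_le hMR he hmd (hma.trans hae) hde)

theorem coatomsAbove_of_isGLB (hMR : C.IsMR) {a b m : L} (hm : IsGLB {a, b} m) :
    coatomsAbove m = coatomsAbove a ∪ coatomsAbove b := by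
  refine (Set.union_subset (coatomsAbove_antitone (hm.1 (by simp)))
    (coatomsAbove_antitone (hm.1 (by simp)))).antisymm' fun d ⟨hd, hmd⟩ => ?_
  by_contra hab
  rw [Set.mem_union, not_or] at hab
  have hma : m ≤ a := hm.1 (by simp)
  have hmb : m ≤ b := hm.1 (by simp)
  have htm : C.Δ ⊤ (C.Δ d m) ≤ m := hm.2 <| by
    simp [delta_top_delta_le_of_not_le hMR hd hmd hma fun h => hab.1 ⟨hd, h⟩,
      delta_top_delta_le_of_not_le hMR hd hmd hmb fun h => hab.2 ⟨hd, h⟩]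
  exact not_exists_lb_delta hMR hd.lt_top
    ⟨_, C.delta_top_mono (C.delta_le hmd), htm.trans hmd⟩

theorem exists_coatomsAbove_eq (hMR : C.IsMR) {T : Set L} (hT : T ⊆ {c | IsCoatom c})
    (hTσ : ∀ c ∈ T, C.Δ ⊤ c ∉ T) : ∃ x, coatomsAbove x = T := by
  induction T, T.toFinite using Set.Finite.induction_on with
  | empty => exact ⟨⊤, coatomsAbove_top⟩
  | @insert c T _ _ ih =>
    have hc : IsCoatom c := hT (Set.mem_insert c T)
    obtain ⟨x, hx⟩ := ih ((Set.subset_insert c T).trans hT)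
      fun d hd hσd => hTσ d (Or.inr hd) (Or.inr hσd)
    have hxc : ¬x ≤ C.Δ ⊤ c := fun hle =>
      hTσ c (Set.mem_insert c T) (Or.inr (hx ▸ ⟨C.isCoatom_delta_top hc, hle⟩))
    obtain ⟨m, hm⟩ := exists_isGLB_pair_iff.2 ((exists_lb_iff_not_le_delta_top hMR hc).2 hxc)
    refine ⟨m, ?_⟩
    rw [coatomsAbove_of_isGLB hMR hm, hx, coatomsAbove_of_isCoatom hc, Set.union_singleton]

section CoatomBijection

variable {φ F : L → L}

theorem exists_coatomsAbove_eq_image (hMR : C.IsMR)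
    (hmaps : Set.MapsTo φ {c | IsCoatom c} {c | IsCoatom c})
    (hinj : Set.InjOn φ {c | IsCoatom c})
    (hφ : ∀ c : L, IsCoatom c → φ (C.Δ ⊤ c) = C.Δ ⊤ (φ c)) (x : L) :
    ∃ z, coatomsAbove z = φ '' coatomsAbove x := by
  refine exists_coatomsAbove_eq hMR (hmaps.mono_left (coatomsAbove_subset x)).image_subset ?_
  rintro _ ⟨d, ⟨hd, hxd⟩, rfl⟩ ⟨d', ⟨hd', hxd'⟩, hφd'⟩
  rw [← hφ d hd] at hφd'
  obtain rfl : d' = C.Δ ⊤ d := hinj hd' (C.isCoatom_delta_top hd) hφd'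
  exact not_exists_lb_delta hMR hd.lt_top ⟨x, hxd', hxd⟩

theorem le_iff_of_coatomsAbove_eq_image (hMR : C.IsMR) (hinj : Set.InjOn φ {c | IsCoatom c})
    (hF : ∀ x, coatomsAbove (F x) = φ '' coatomsAbove x) {x y : L} :
    F x ≤ F y ↔ x ≤ y := by
  rw [le_iff_coatomsAbove_subset hMR, le_iff_coatomsAbove_subset hMR, hF, hF,
    hinj.image_subset_image_iff (coatomsAbove_subset y) (coatomsAbove_subset x)]

theorem map_delta_of_coatomsAbove_eq_image (hMR : C.IsMR) (hinj : Set.InjOn φ {c | IsCoatom c})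
    (hφ : ∀ c : L, IsCoatom c → φ (C.Δ ⊤ c) = C.Δ ⊤ (φ c))
    (hF : ∀ x, coatomsAbove (F x) = φ '' coatomsAbove x) {x y : L} (h : y ≤ x) :
    F (C.Δ x y) = C.Δ (F x) (F y) := by
  have hFyx : F y ≤ F x := (le_iff_of_coatomsAbove_eq_image hMR hinj hF).2 h
  have hdiff :
      φ '' (coatomsAbove y \ coatomsAbove x) = φ '' coatomsAbove y \ φ '' coatomsAbove x :=
    (hinj.mono (coatomsAbove_subset y)).image_sdiff_subset (coatomsAbove_antitone h)
  have hcomm : φ '' (C.Δ ⊤ '' (coatomsAbove y \ coatomsAbove x)) =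
      C.Δ ⊤ '' (φ '' (coatomsAbove y \ coatomsAbove x)) := by
    simp only [Set.image_image]
    exact Set.image_congr fun c hc => hφ c hc.1.1
  apply coatomsAbove_injective hMR
  rw [hF, coatomsAbove_delta hMR h, coatomsAbove_delta hMR hFyx, hF, hF, Set.image_union, hcomm,
    hdiff]

end CoatomBijection

end CubicAlgebra

open CubicAlgebra in
/-- A `Δ(1,·)`-preserving bijection of the coatoms of a finite MR-algebra
extends to an automorphism. -/
theorem coatom_bijection_extends {L : Type*} [SemilatticeSup L] [OrderTop L]
    [Finite L] (C : CubicAlgebra L) (hMR : C.IsMR)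
    (φ : L → L) (hbij : Set.BijOn φ {c : L | IsCoatom c} {c : L | IsCoatom c})
    (hΔ : ∀ c : L, IsCoatom c → φ (C.Δ ⊤ c) = C.Δ ⊤ (φ c)) :
    ∃ Φ : L ≃o L,
      (∀ x y : L, y ≤ x → Φ (C.Δ x y) = C.Δ (Φ x) (Φ y)) ∧
        ∀ c : L, IsCoatom c → Φ c = φ c := by
  choose F hF using exists_coatomsAbove_eq_image hMR hbij.mapsTo hbij.injOn hΔ
  let e : L ↪o L := .ofMapLEIff F fun _ _ => le_iff_of_coatomsAbove_eq_image hMR hbij.injOn hF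
  refine ⟨.ofSurjective e (Finite.surjective_of_injective e.injective),
    fun x y h => map_delta_of_coatomsAbove_eq_image hMR hbij.injOn hΔ hF h, fun c hc => ?_⟩
  apply coatomsAbove_injective hMR
  change coatomsAbove (F c) = coatomsAbove (φ c)
  rw [hF, coatomsAbove_of_isCoatom hc, coatomsAbove_of_isCoatom (hbij.mapsTo hc),
    Set.image_singleton]
end

section
/- Let L be a cubic algebra and let a, b, c ∈ L with a ≤ b and a ≤ c. Then Δ(b ∨ c, b) ≤ c if and only if b ≤ c. -/
namespace CubicAlgebra

variable {L : Type*} [SemilatticeSup L] [OrderTop L] (C : CubicAlgebra L)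

theorem delta_le_self {x y : L} (hyx : y ≤ x) : C.Δ x y ≤ x :=
  le_sup_left.trans_eq (C.ax_a x y hyx)

theorem le_of_delta_le {x y z w : L} (hzy : z ≤ y) (hyx : y ≤ x) (hΔ : C.Δ x y ≤ w)
    (hzw : z ≤ w) : x ≤ w :=
  calc x = C.Δ x z ⊔ z := (C.ax_a x z (hzy.trans hyx)).symm
    _ ≤ w := sup_le ((C.ax_d x y z hzy hyx).trans hΔ) hzw

end CubicAlgebra

/-- In a cubic algebra, if `a ≤ b` and `a ≤ c` then `b ⪯ c` iff `b ≤ c`. -/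
theorem preceq_iff_le {L : Type*} [SemilatticeSup L] [OrderTop L]
    (C : CubicAlgebra L) (a b c : L) (hab : a ≤ b) (hac : a ≤ c) :
    C.Δ (b ⊔ c) b ≤ c ↔ b ≤ c := by
  constructor
  · intro h
    exact le_sup_left.trans (C.le_of_delta_le hab le_sup_left h hac)
  · intro h
    rw [sup_eq_right.mpr h]
    exact C.delta_le_self h
end

section
/- The map (c, B) ↦ (c, B*) on locator pairs is a closure operator with respect to the locator-pair relation ≤: (i) (c, B) ≤ (c, B*) for every locator pair (c, B); (ii) if (c₁, B₁) ≤ (c₂, B₂) then (c₁, B₁*) ≤ (c₂, B₂*); (iii) (B*)* = B*, so the map is idempotent. -/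
open scoped symmDiff

/-- An implication sublattice of the Boolean algebra `Finset (Fin n)`:
a nonempty subset closed under relative implication `x → y = xᶜ ∪ y` and
under intersection. -/
def IsImpSub {n : ℕ} (B : Set (Finset (Fin n))) : Prop :=
  B.Nonempty ∧ (∀ x ∈ B, ∀ y ∈ B, xᶜ ∪ y ∈ B) ∧ (∀ x ∈ B, ∀ y ∈ B, x ∩ y ∈ B)

/-- `a` is the minimum of `B`. -/
def IsMinOf {n : ℕ} (B : Set (Finset (Fin n))) (a : Finset (Fin n)) : Prop :=
  a ∈ B ∧ ∀ b ∈ B, a ⊆ b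

/-- The locator-pair relation: `(c₁, B₁) ≤ (c₂, B₂)` iff `B₁ ⊆ B₂` and
`(c₁ Δ c₂) ∪ min B₁ ∈ B₂`. -/
def LocLe {n : ℕ} (c₁ : Finset (Fin n)) (B₁ : Set (Finset (Fin n)))
    (c₂ : Finset (Fin n)) (B₂ : Set (Finset (Fin n))) : Prop :=
  B₁ ⊆ B₂ ∧ ∃ a₁ : Finset (Fin n), IsMinOf B₁ a₁ ∧ (c₁ ∆ c₂) ∪ a₁ ∈ B₂

/-- `Bstar c B a` is the smallest implication sublattice containing `B ∪ {c}`
all of whose elements lie above `a = min B`, i.e. the Boolean subalgebra of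
`[min B, Fin n]` generated by `B ∪ {c}`. -/
def Bstar {n : ℕ} (c : Finset (Fin n)) (B : Set (Finset (Fin n)))
    (a : Finset (Fin n)) : Set (Finset (Fin n)) :=
  ⋂₀ {C : Set (Finset (Fin n)) | IsImpSub C ∧ B ⊆ C ∧ c ∈ C ∧ ∀ x ∈ C, a ⊆ x}

/-!
`Bstar c B a` is an intersection of implication sublattices, hence one itself, and it lies
inside every implication sublattice `S ⊇ B ∪ {c}`, because the elements of `S` above `a` again
form an implication sublattice. For monotonicity the point is that `c₁` is recovered in `B₂*`
as `(c₂ ∆ d) ∪ a₁` with `d = (c₁ ∆ c₂) ∪ a₁`, and implication sublattices are closed under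
`(x, y, a) ↦ (x ∆ y) ∪ a`.
-/

namespace IsImpSub

variable {n : ℕ} {S : Set (Finset (Fin n))} {x y a c₁ c₂ : Finset (Fin n)}

lemma union_mem (hS : IsImpSub S) (hx : x ∈ S) (hy : y ∈ S) : x ∪ y ∈ S := by
  have h := hS.2.1 _ (hS.2.1 x hx y hy) y hy
  rwa [show (xᶜ ∪ y)ᶜ ∪ y = x ∪ y by
    ext; simp only [Finset.mem_union, Finset.mem_compl]; tauto] at h

lemma symmDiff_union_mem (hS : IsImpSub S) (hx : x ∈ S) (hy : y ∈ S) (ha : a ∈ S) :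
    x ∆ y ∪ a ∈ S := by
  have h := hS.2.2 _ (hS.union_mem (hS.union_mem hx hy) ha) _
    (hS.2.1 _ (hS.2.2 x hx y hy) a ha)
  rwa [show (x ∪ y ∪ a) ∩ ((x ∩ y)ᶜ ∪ a) = x ∆ y ∪ a by
    ext
    simp only [Finset.mem_union, Finset.mem_inter, Finset.mem_compl, Finset.mem_symmDiff]
    tauto] at h

lemma mem_of_symmDiff_union_mem (hS : IsImpSub S) (hc₂ : c₂ ∈ S) (hd : c₁ ∆ c₂ ∪ a ∈ S)
    (ha : a ∈ S) (hac₁ : a ⊆ c₁) : c₁ ∈ S := by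
  have h := hS.symmDiff_union_mem hc₂ hd ha
  rwa [show c₂ ∆ (c₁ ∆ c₂ ∪ a) ∪ a = c₁ by
    ext t
    have := @hac₁ t
    simp only [Finset.mem_union, Finset.mem_symmDiff]
    tauto] at h

lemma sep_superset (hS : IsImpSub S) (hx : x ∈ S) (hax : a ⊆ x) :
    IsImpSub {y ∈ S | a ⊆ y} :=
  ⟨⟨x, hx, hax⟩,
    fun _ hy _ hz => ⟨hS.2.1 _ hy.1 _ hz.1, hz.2.trans Finset.subset_union_right⟩,
    fun _ hy _ hz => ⟨hS.2.2 _ hy.1 _ hz.1, Finset.subset_inter hy.2 hz.2⟩⟩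

end IsImpSub

lemma isImpSub_univ {n : ℕ} : IsImpSub (Set.univ : Set (Finset (Fin n))) :=
  ⟨Set.univ_nonempty, fun _ _ _ _ => trivial, fun _ _ _ _ => trivial⟩

lemma IsMinOf.unique {n : ℕ} {B : Set (Finset (Fin n))} {a a' : Finset (Fin n)}
    (h : IsMinOf B a) (h' : IsMinOf B a') : a = a' :=
  Finset.Subset.antisymm (h.2 _ h'.1) (h'.2 _ h.1)

section Bstar

variable {n : ℕ} {c a x : Finset (Fin n)} {B S : Set (Finset (Fin n))}

lemma subset_bstar : B ⊆ Bstar c B a := fun _ hb _ hC => hC.2.1 hb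

lemma mem_bstar : c ∈ Bstar c B a := fun _ hC => hC.2.2.1

lemma isImpSub_bstar : IsImpSub (Bstar c B a) :=
  ⟨⟨c, mem_bstar⟩,
    fun x hx y hy C hC => hC.1.2.1 x (hx C hC) y (hy C hC),
    fun x hx y hy C hC => hC.1.2.2 x (hx C hC) y (hy C hC)⟩

lemma bstar_subset (hS : IsImpSub S) (hBS : B ⊆ S) (hcS : c ∈ S) (haS : ∀ x ∈ S, a ⊆ x) :
    Bstar c B a ⊆ S :=
  Set.sInter_subset_of_mem ⟨hS, hBS, hcS, haS⟩

lemma bstar_subset_sep (hS : IsImpSub S) (hBS : B ⊆ S) (hcS : c ∈ S) (hac : a ⊆ c)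
    (hBa : ∀ b ∈ B, a ⊆ b) : Bstar c B a ⊆ {x ∈ S | a ⊆ x} :=
  bstar_subset (hS.sep_superset hcS hac) (fun b hb => ⟨hBS hb, hBa b hb⟩) ⟨hcS, hac⟩
    fun _ hx => hx.2

lemma superset_of_mem_bstar (hac : a ⊆ c) (hBa : ∀ b ∈ B, a ⊆ b) (hx : x ∈ Bstar c B a) :
    a ⊆ x :=
  (bstar_subset_sep isImpSub_univ (Set.subset_univ B) trivial hac hBa hx).2

lemma isMinOf_bstar (ha : IsMinOf B a) (hac : a ⊆ c) : IsMinOf (Bstar c B a) a :=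
  ⟨subset_bstar ha.1, fun _ => superset_of_mem_bstar hac ha.2⟩

end Bstar

/-- The map `(c, B) ↦ (c, B*)` is a closure operator on locator pairs. -/
theorem bstar_closure_operator (n : ℕ) :
    (∀ (c : Finset (Fin n)) (B : Set (Finset (Fin n))) (a : Finset (Fin n)),
        IsImpSub B → IsMinOf B a → a ⊆ c → LocLe c B c (Bstar c B a)) ∧
      (∀ (c₁ : Finset (Fin n)) (B₁ : Set (Finset (Fin n))) (a₁ : Finset (Fin n))
          (c₂ : Finset (Fin n)) (B₂ : Set (Finset (Fin n))) (a₂ : Finset (Fin n)),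
        IsImpSub B₁ → IsMinOf B₁ a₁ → a₁ ⊆ c₁ →
        IsImpSub B₂ → IsMinOf B₂ a₂ → a₂ ⊆ c₂ →
        LocLe c₁ B₁ c₂ B₂ → LocLe c₁ (Bstar c₁ B₁ a₁) c₂ (Bstar c₂ B₂ a₂)) ∧
      (∀ (c : Finset (Fin n)) (B : Set (Finset (Fin n))) (a : Finset (Fin n)),
        IsImpSub B → IsMinOf B a → a ⊆ c →
        Bstar c (Bstar c B a) a = Bstar c B a) := by
  refine ⟨?extensive, ?monotone, ?idempotent⟩
  case extensive =>
    intro c B a _ ha _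
    refine ⟨subset_bstar, a, ha, ?_⟩
    simpa using subset_bstar ha.1
  case monotone =>
    intro c₁ B₁ a₁ c₂ B₂ a₂ _ ha₁ hac₁ _ _ _ ⟨hB₁₂, a, ha, hd⟩
    rw [ha.unique ha₁] at hd
    have hc₁ : c₁ ∈ Bstar c₂ B₂ a₂ :=
      isImpSub_bstar.mem_of_symmDiff_union_mem mem_bstar (subset_bstar hd)
        (subset_bstar (hB₁₂ ha₁.1)) hac₁
    have hstar : Bstar c₁ B₁ a₁ ⊆ Bstar c₂ B₂ a₂ := fun _ hx =>
      (bstar_subset_sep isImpSub_bstar (hB₁₂.trans subset_bstar) hc₁ hac₁ ha₁.2 hx).1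
    exact ⟨hstar, a₁, isMinOf_bstar ha₁ hac₁, subset_bstar hd⟩
  case idempotent =>
    intro c B a _ ha hac
    exact (bstar_subset isImpSub_bstar subset_rfl mem_bstar
      fun _ => superset_of_mem_bstar hac ha.2).antisymm subset_bstar
end

section
/- Let A₁ and A₂ be MR-subalgebras of 𝓛ₙ, neither equal to {𝟙}. Then the intervals [{𝟙}, A₁] and [{𝟙}, A₂] in the finite poset of MR-subalgebras of 𝓛ₙ ordered by inclusion are order-isomorphic if and only if A₁ and A₂ have the same dimension. -/
/-!
The caret axiom is automatic: `x ∧ Δ(x ∨ y, y)` is always `Δ(x, y)`, so an MR-subalgebra is a set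
containing `𝟙` and closed under `∨` and `Δ`. Writing faces as sign vectors (`0` for a free
direction), `∨` and `Δ` act coordinatewise. Call two coordinates on which `A` is not identically
free *linked* when they agree, or are opposite, throughout `A`. Reading off one coordinate per
linked class is a bijection of `A` onto `{-1, 0, 1}ᵏ`: on two unlinked coordinates `A` is onto
`{-1, 0, 1}²` (a finite check), and a majority term built from `∨` and `Δ` lifts this to all `k`
coordinates (Baker–Pixley). So `|A| = 3ᵏ`, `A` has `2k` coatoms, and for `k₁ = k₂` the bijection
`A₁ ≃ A₂` respects `∨` and `Δ`, hence maps the subalgebras below `A₁` onto those below `A₂`.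
Conversely the atoms of `[{𝟙}, A]` are the subalgebras `{𝟙, x, -x}` with `x ≠ 𝟙`, so there are
`(3ᵏ - 1) / 2` of them, an invariant of the order type of the interval.
-/

lemma Order.height_eq_one_iff {α : Type*} [Preorder α] {a : α} :
    Order.height a = 1 ↔ ¬IsMin a ∧ ∀ b < a, IsMin b := by
  have hle : Order.height a ≤ 1 ↔ ∀ b < a, IsMin b := by
    simpa [Order.lt_one_iff] using Order.height_le_coe_iff (x := a) (n := 1)
  rw [← hle, ← Order.height_ne_zero]
  exact ⟨fun h => ⟨by simp [h], h.le⟩,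
    fun ⟨h0, h1⟩ => le_antisymm h1 (Order.one_le_iff_ne_zero.mpr h0)⟩

lemma Order.natCard_height_eq_of_orderIso {α β : Type*} [Preorder α] [Preorder β] (e : α ≃o β)
    (k : ℕ∞) : Nat.card {a : α // Order.height a = k} = Nat.card {b : β // Order.height b = k} :=
  Nat.card_congr (e.toEquiv.subtypeEquiv fun a => by simp [Order.height_orderIso])

lemma Nat.card_eq_mul_of_card_fiber_eq {α β : Type*} [Finite α] [Finite β] (f : α → β) {k : ℕ}
    (h : ∀ b, Nat.card {a // f a = b} = k) : Nat.card α = Nat.card β * k := by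
  have := Fintype.ofFinite β
  rw [← Nat.card_congr (Equiv.sigmaFiberEquiv f), Nat.card_sigma]
  simp [h]

theorem exists_eqOn_of_majority {ι β : Type*} {S : Set (ι → β)} (hS : S.Nonempty)
    (hmaj : ∀ x ∈ S, ∀ y ∈ S, ∀ z ∈ S, ∃ w ∈ S, ∀ i,
      (y i = z i → w i = y i) ∧ (x i = z i → w i = x i) ∧ (x i = y i → w i = x i))
    (hpair : ∀ i j (g : ι → β), ∃ x ∈ S, x i = g i ∧ x j = g j) (g : ι → β) (T : Finset ι) :
    ∃ x ∈ S, ∀ i ∈ T, x i = g i := by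
  classical
  induction T using Finset.strongInduction with | H T ih =>
  by_cases hT : 2 < T.card
  · obtain ⟨a, ha, b, hb, c, hc, hab, hac, hbc⟩ := Finset.two_lt_card.mp hT
    obtain ⟨x, hxS, hx⟩ := ih _ (Finset.erase_ssubset ha)
    obtain ⟨y, hyS, hy⟩ := ih _ (Finset.erase_ssubset hb)
    obtain ⟨z, hzS, hz⟩ := ih _ (Finset.erase_ssubset hc)
    obtain ⟨w, hwS, hw⟩ := hmaj x hxS y hyS z hzS
    -- each `i ∈ T` is erased from at most one of the three sets, so two of `x, y, z` agree there
    refine ⟨w, hwS, fun i hi => ?_⟩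
    have hx' := fun h : i ≠ a => hx i (Finset.mem_erase.mpr ⟨h, hi⟩)
    have hy' := fun h : i ≠ b => hy i (Finset.mem_erase.mpr ⟨h, hi⟩)
    have hz' := fun h : i ≠ c => hz i (Finset.mem_erase.mpr ⟨h, hi⟩)
    by_cases hia : i = a
    · subst hia
      rw [(hw i).1 ((hy' hab).trans (hz' hac).symm), hy' hab]
    by_cases hib : i = b
    · subst hib
      rw [(hw i).2.1 ((hx' hia).trans (hz' hbc).symm), hx' hia]
    · rw [(hw i).2.2 ((hx' hia).trans (hy' hib).symm), hx' hia]
  rcases T.eq_empty_or_nonempty with rfl | ⟨a, ha⟩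
  · obtain ⟨x, hx⟩ := hS
    exact ⟨x, hx, by simp⟩
  have hcard : (T.erase a).card ≤ 1 := by rw [Finset.card_erase_of_mem ha]; omega
  obtain ⟨b, hb⟩ : ∃ b, ∀ i ∈ T.erase a, i = b := by
    rcases (T.erase a).eq_empty_or_nonempty with h | ⟨b, hb⟩
    · exact ⟨a, by simp [h]⟩
    · exact ⟨b, fun i hi => Finset.card_le_one.mp hcard i hi b hb⟩
  obtain ⟨x, hxS, hxa, hxb⟩ := hpair a b g
  refine ⟨x, hxS, fun i hi => ?_⟩
  by_cases hia : i = a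
  · rw [hia, hxa]
  · rw [hb i (Finset.mem_erase.mpr ⟨hia, hi⟩), hxb]

namespace Cube
variable {n : ℕ} {A Z : Set (Cube n)} {x y : Cube n} {i j k : Fin n}

instance : InvolutiveNeg (Cube n) where
  neg x := ⟨x.neg, x.pos, x.disj.symm⟩
  neg_neg _ := rfl

def coord (x : Cube n) (i : Fin n) : SignType :=
  if i ∈ x.pos then 1 else if i ∈ x.neg then -1 else 0

def signSup (a b : SignType) : SignType := if a = b then a else 0

def signDelta (a b : SignType) : SignType := if a = 0 then -b else a

lemma notMem_neg_of_mem_pos (h : i ∈ x.pos) : i ∉ x.neg := Finset.disjoint_left.mp x.disj h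

lemma coord_eq_one_iff : coord x i = 1 ↔ i ∈ x.pos := by
  unfold coord; split_ifs <;> simp_all

lemma coord_eq_neg_one_iff : coord x i = -1 ↔ i ∈ x.neg := by
  unfold coord; split_ifs <;> simp_all [notMem_neg_of_mem_pos]

lemma coord_injective : Function.Injective (coord (n := n)) := by
  intro x y h
  ext i
  · rw [← coord_eq_one_iff, ← coord_eq_one_iff, h]
  · rw [← coord_eq_neg_one_iff, ← coord_eq_neg_one_iff, h]

lemma ext_coord (h : ∀ i, coord x i = coord y i) : x = y := coord_injective (funext h)

instance inst_s15 : Finite (Cube n) := Finite.of_injective _ coord_injective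

@[simp] lemma coord_top (i : Fin n) : coord (⊤ : Cube n) i = 0 := rfl

@[simp] lemma coord_neg (x : Cube n) (i : Fin n) : coord (-x) i = -coord x i := by
  change (if i ∈ x.neg then 1 else if i ∈ x.pos then -1 else 0) = -coord x i
  unfold coord; split_ifs <;> simp_all [notMem_neg_of_mem_pos]

@[simp] lemma coord_sup (x y : Cube n) (i : Fin n) :
    coord (x ⊔ y) i = signSup (coord x i) (coord y i) := by
  change (if i ∈ x.pos ∩ y.pos then 1 else if i ∈ x.neg ∩ y.neg then -1 else 0) = _
  unfold coord signSup; split_ifs <;> simp_all [notMem_neg_of_mem_pos]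

@[simp] lemma coord_delta (x y : Cube n) (i : Fin n) :
    coord (delta x y) i = signDelta (coord x i) (coord y i) := by
  unfold coord signDelta delta; split_ifs <;> simp_all [notMem_neg_of_mem_pos]

lemma signSup_eq_right_iff (a b : SignType) : signSup a b = b ↔ b = 0 ∨ a = b := by
  revert a b; decide

lemma le_iff_coord : x ≤ y ↔ ∀ i, coord y i = 0 ∨ coord x i = coord y i := by
  rw [← sup_eq_right, ← coord_injective.eq_iff, funext_iff]
  simp only [coord_sup, signSup_eq_right_iff]

@[simp] lemma neg_top : -(⊤ : Cube n) = ⊤ := rfl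

@[simp] lemma neg_eq_top : -x = ⊤ ↔ x = ⊤ := by rw [neg_eq_iff_eq_neg, neg_top]

@[simp] lemma top_delta (x : Cube n) : delta ⊤ x = -x := ext_coord fun i => by simp [signDelta]

@[simp] lemma delta_top_right (x : Cube n) : delta x ⊤ = x :=
  ext_coord fun i => by simp [signDelta, eq_comm]

@[simp] lemma delta_self (x : Cube n) : delta x x = x := ext_coord fun i => by simp [signDelta]

@[simp] lemma delta_neg_self (x : Cube n) : delta x (-x) = x :=
  ext_coord fun i => by simp [signDelta]

@[simp] lemma neg_delta_self (x : Cube n) : delta (-x) x = -x := by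
  simpa using delta_neg_self (-x)

@[simp] lemma sup_neg_self (x : Cube n) : x ⊔ -x = ⊤ := ext_coord fun i => by simp [signSup]

@[simp] lemma neg_sup_self (x : Cube n) : -x ⊔ x = ⊤ := by rw [sup_comm, sup_neg_self]

lemma neg_ne_self (hx : x ≠ ⊤) : -x ≠ x := fun h =>
  hx <| ext_coord fun i => by
    have := congrArg (coord · i) h
    simp only [coord_neg, coord_top] at this ⊢
    revert this; generalize coord x i = a; revert a; decide

lemma isGLB_delta (x y : Cube n) : IsGLB {x, delta (x ⊔ y) y} (delta x y) := by
  refine ⟨?_, fun w hw => ?_⟩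
  · rintro z (hz | hz) <;> rw [hz] <;> refine le_iff_coord.mpr fun i => ?_ <;>
      simp only [coord_delta, coord_sup] <;>
      generalize coord x i = a, coord y i = b <;> revert a b <;> decide
  · have hwx := le_iff_coord.mp (hw (Set.mem_insert _ _))
    have hwy := le_iff_coord.mp (hw (Set.mem_insert_of_mem _ rfl))
    refine le_iff_coord.mpr fun i => ?_
    have hwxi := hwx i
    have hwyi := hwy i
    simp only [coord_delta, coord_sup] at hwyi ⊢
    revert hwxi hwyi
    generalize coord w i = c, coord x i = a, coord y i = b
    revert a b c; decide

lemma isMRSub_iff : IsMRSub A ↔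
    ⊤ ∈ A ∧ (∀ x ∈ A, ∀ y ∈ A, x ⊔ y ∈ A) ∧ ∀ x ∈ A, ∀ y ∈ A, delta x y ∈ A := by
  refine ⟨fun ⟨htop, hsup, _, hcaret⟩ => ⟨htop, hsup, fun x hx y hy => ?_⟩,
    fun ⟨htop, hsup, hdelta⟩ => ⟨htop, hsup, fun x hx y hy _ => hdelta x hx y hy,
      fun x hx y hy => ⟨delta x y, hdelta x hx y hy, isGLB_delta x y⟩⟩⟩
  obtain ⟨m, hm, hglb⟩ := hcaret x hx y hy
  rwa [hglb.unique (isGLB_delta x y)] at hm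

namespace IsMRSub

lemma top_mem (hA : IsMRSub A) : ⊤ ∈ A := hA.1

lemma sup_mem (hA : IsMRSub A) (hx : x ∈ A) (hy : y ∈ A) : x ⊔ y ∈ A := hA.2.1 x hx y hy

lemma delta_mem (hA : IsMRSub A) (hx : x ∈ A) (hy : y ∈ A) : delta x y ∈ A :=
  (isMRSub_iff.mp hA).2.2 x hx y hy

lemma neg_mem (hA : IsMRSub A) (hx : x ∈ A) : -x ∈ A := by
  simpa using hA.delta_mem hA.top_mem hx

end IsMRSub

lemma isMRSub_singleton_top : IsMRSub ({⊤} : Set (Cube n)) :=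
  isMRSub_iff.mpr ⟨rfl, by simp, by simp⟩

lemma isMRSub_triple (x : Cube n) : IsMRSub {⊤, x, -x} := by
  refine isMRSub_iff.mpr ⟨by simp, ?_, ?_⟩ <;>
  · rintro a (rfl | rfl | rfl) b (rfl | rfl | rfl) <;> simp

lemma triple_subset_iff (hZ : IsMRSub Z) : {⊤, x, -x} ⊆ Z ↔ x ∈ Z := by
  simp only [Set.insert_subset_iff, Set.singleton_subset_iff]
  exact ⟨fun h => h.2.1, fun h => ⟨hZ.top_mem, h, hZ.neg_mem h⟩⟩

lemma triple_eq_triple_iff (hx : x ≠ ⊤) :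
    ({⊤, x, -x} : Set (Cube n)) = {⊤, y, -y} ↔ x = y ∨ x = -y := by
  refine ⟨fun h => ?_, ?_⟩
  · have hxy : x ∈ ({⊤, y, -y} : Set (Cube n)) := h ▸ by simp
    simpa [hx] using hxy
  · rintro (rfl | rfl)
    · rfl
    · rw [neg_neg, Set.pair_comm]

lemma eq_singleton_top_iff (hZ : IsMRSub Z) : Z = {⊤} ↔ ∀ x ∈ Z, x = ⊤ :=
  ⟨fun h x hx => by rwa [h] at hx, fun h => Set.eq_singleton_iff_unique_mem.mpr ⟨hZ.top_mem, h⟩⟩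

abbrev MRInterval (A : Set (Cube n)) : Type := {Z : Set (Cube n) // IsMRSub Z ∧ Z ⊆ A}

namespace MRInterval

lemma isMin_iff (hA : IsMRSub A) {Z : MRInterval A} : IsMin Z ↔ Z.1 = {⊤} := by
  let bot : MRInterval A :=
    ⟨{⊤}, isMRSub_singleton_top, Set.singleton_subset_iff.mpr hA.top_mem⟩
  have hbot : IsBot bot := fun W => Set.singleton_subset_iff.mpr W.2.1.top_mem
  rw [hbot.isMin_iff, Subtype.ext_iff]

lemma height_eq_one_iff (hA : IsMRSub A) (Z : MRInterval A) :
    Order.height Z = 1 ↔ ∃ x ≠ ⊤, Z.1 = {⊤, x, -x} := by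
  simp only [Order.height_eq_one_iff, isMin_iff hA, eq_singleton_top_iff Z.2.1]
  constructor
  · rintro ⟨hZ, hmin⟩
    obtain ⟨x, hxZ, hx⟩ : ∃ x ∈ Z.1, x ≠ ⊤ := by simpa using hZ
    have hsub : {⊤, x, -x} ⊆ Z.1 := (triple_subset_iff Z.2.1).mpr hxZ
    refine ⟨x, hx, hsub.eq_or_ssubset.elim Eq.symm fun hlt => ?_⟩
    have := hmin ⟨_, isMRSub_triple x, hsub.trans Z.2.2⟩ hlt
    exact (hx (by simpa using (Set.ext_iff.mp this x).mp (by simp))).elim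
  · rintro ⟨x, hx, hZ⟩
    refine ⟨fun h => hx (h x (by simp [hZ])), fun W hWZ => ?_⟩
    by_contra hW
    obtain ⟨y, hyW, hy⟩ : ∃ y ∈ W.1, y ≠ ⊤ := by simpa [eq_singleton_top_iff W.2.1] using hW
    have hyZ : y ∈ ({⊤, x, -x} : Set (Cube n)) := hZ ▸ hWZ.le hyW
    have hxW : x ∈ W.1 := by
      rcases hyZ with rfl | rfl | rfl
      · exact absurd rfl hy
      · exact hyW
      · simpa using W.2.1.neg_mem hyW
    refine hWZ.not_ge ?_
    change Z.1 ⊆ W.1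
    rw [hZ, triple_subset_iff W.2.1]
    exact hxW

end MRInterval

lemma ncard_eq_two_mul_card_atoms_add_one (hA : IsMRSub A) :
    A.ncard = 2 * Nat.card {Z : MRInterval A // Order.height Z = 1} + 1 := by
  let atom (x : ↥(A \ {⊤})) : {Z : MRInterval A // Order.height Z = 1} :=
    ⟨⟨{⊤, x.1, -x.1}, isMRSub_triple x.1, (triple_subset_iff hA).mpr x.2.1⟩,
      (MRInterval.height_eq_one_iff hA _).mpr ⟨x.1, x.2.2, rfl⟩⟩
  have hfiber : ∀ Z, Nat.card {x // atom x = Z} = 2 := by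
    rintro ⟨Z, hZ⟩
    obtain ⟨x, hx, hZx⟩ := (MRInterval.height_eq_one_iff hA Z).mp hZ
    have hxA : x ∈ A := Z.2.2 (by simp [hZx])
    have hatom : ∀ y : ↥(A \ {⊤}), atom y = ⟨Z, hZ⟩ ↔ y.1 = x ∨ y.1 = -x := fun y => by
      rw [← triple_eq_triple_iff y.2.2, ← hZx]
      exact ⟨fun h => congrArg (·.1.1) h, fun h => Subtype.ext (Subtype.ext h)⟩
    refine Nat.card_eq_two_iff.mpr ⟨⟨⟨x, hxA, hx⟩, (hatom _).mpr (Or.inl rfl)⟩,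
      ⟨⟨-x, hA.neg_mem hxA, by simpa using hx⟩, (hatom _).mpr (Or.inr rfl)⟩,
      fun h => neg_ne_self hx (congrArg (·.1.1) h).symm, ?_⟩
    ext ⟨y, hy⟩
    simp only [Set.mem_insert_iff, Set.mem_singleton_iff, Set.mem_univ, iff_true]
    rcases (hatom y).mp hy with h | h
    · exact Or.inl (Subtype.ext (Subtype.ext h))
    · exact Or.inr (Subtype.ext (Subtype.ext h))
  rw [← Set.ncard_sdiff_singleton_add_one hA.top_mem, ← Nat.card_coe_set_eq,
    Nat.card_eq_mul_of_card_fiber_eq atom hfiber, mul_comm]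

def IsLive (A : Set (Cube n)) (i : Fin n) : Prop := ∃ x ∈ A, coord x i ≠ 0

def Linked (A : Set (Cube n)) (i j : Fin n) : Prop :=
  (∀ x ∈ A, coord x i = coord x j) ∨ ∀ x ∈ A, coord x i = -coord x j

lemma coord_eq_zero_of_not_isLive (hi : ¬IsLive A i) (hx : x ∈ A) : coord x i = 0 := by
  by_contra h
  exact hi ⟨x, hx, h⟩

namespace Linked

lemma refl (A : Set (Cube n)) (i : Fin n) : Linked A i i := Or.inl fun _ _ => rfl

lemma symm (h : Linked A i j) : Linked A j i := by
  rcases h with h | h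
  · exact Or.inl fun x hx => (h x hx).symm
  · exact Or.inr fun x hx => by rw [h x hx, neg_neg]

lemma trans (h : Linked A i j) (h' : Linked A j k) : Linked A i k := by
  rcases h with h | h <;> rcases h' with h' | h'
  · exact Or.inl fun x hx => (h x hx).trans (h' x hx)
  · exact Or.inr fun x hx => (h x hx).trans (h' x hx)
  · exact Or.inr fun x hx => by rw [h x hx, h' x hx]
  · exact Or.inl fun x hx => by rw [h x hx, h' x hx, neg_neg]

lemma coord_eq_iff (h : Linked A i j) (hx : x ∈ A) (hy : y ∈ A) :
    coord x i = coord y i ↔ coord x j = coord y j := by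
  rcases h with h | h <;> rw [h x hx, h y hy]
  exact neg_inj

end Linked

instance linkedSetoid (A : Set (Cube n)) : Setoid {i : Fin n // IsLive A i} where
  r i j := Linked A i j
  iseqv := ⟨fun i => Linked.refl A i, Linked.symm, Linked.trans⟩

def Block (A : Set (Cube n)) : Type := Quotient (linkedSetoid A)

instance : Finite (Block A) := Finite.of_surjective _ Quotient.mk_surjective

noncomputable instance : DecidableEq (Block A) := Classical.decEq _

namespace Block

noncomputable def rep (b : Block A) : Fin n := (Quotient.out b).1

lemma isLive_rep (b : Block A) : IsLive A b.rep := (Quotient.out b).2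

lemma linked_rep_mk (hi : IsLive A i) :
    Linked A i (Block.rep (Quotient.mk (linkedSetoid A) ⟨i, hi⟩)) :=
  Linked.symm (Quotient.mk_out (s := linkedSetoid A) ⟨i, hi⟩)

lemma not_linked_rep {b b' : Block A} (h : b ≠ b') : ¬Linked A b.rep b'.rep :=
  fun hl => h (Quotient.out_equiv_out.mp hl)

end Block

noncomputable def proj (A : Set (Cube n)) (x : Cube n) (b : Block A) : SignType := coord x b.rep

@[simp] lemma proj_sup (x y : Cube n) (b : Block A) :
    proj A (x ⊔ y) b = signSup (proj A x b) (proj A y b) := coord_sup x y _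

@[simp] lemma proj_delta (x y : Cube n) (b : Block A) :
    proj A (delta x y) b = signDelta (proj A x b) (proj A y b) := coord_delta x y _

lemma proj_injOn : Set.InjOn (proj A) A := fun x hx y hy h => ext_coord fun i => by
  by_cases hi : IsLive A i
  · exact ((Block.linked_rep_mk hi).coord_eq_iff hx hy).mpr (congrFun h _)
  · rw [coord_eq_zero_of_not_isLive hi hx, coord_eq_zero_of_not_isLive hi hy]

-- `delta x (-y)` overrides the free coordinates of `x` by those of `y`.
def majority (x y z : Cube n) : Cube n := delta (x ⊔ y) (-(delta (x ⊔ z) (-(y ⊔ z))))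

lemma coord_majority (x y z : Cube n) (i : Fin n) :
    (coord y i = coord z i → coord (majority x y z) i = coord y i) ∧
      (coord x i = coord z i → coord (majority x y z) i = coord x i) ∧
      (coord x i = coord y i → coord (majority x y z) i = coord x i) := by
  simp only [majority, coord_delta, coord_neg, coord_sup]
  generalize coord x i = a, coord y i = b, coord z i = c
  revert a b c; decide

lemma IsMRSub.majority_mem {z : Cube n} (hA : IsMRSub A) (hx : x ∈ A) (hy : y ∈ A) (hz : z ∈ A) :
    majority x y z ∈ A :=
  hA.delta_mem (hA.sup_mem hx hy)
    (hA.neg_mem (hA.delta_mem (hA.sup_mem hx hz) (hA.neg_mem (hA.sup_mem hy hz))))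

set_option synthInstance.maxSize 1000 in
lemma forall_of_signPairs_closed : ∀ E : SignType × SignType → Bool, E (0, 0) →
    (∀ c d, E c → E d → E (signSup c.1 d.1, signSup c.2 d.2)) →
    (∀ c d, E c → E d → E (signDelta c.1 d.1, signDelta c.2 d.2)) →
    (∃ c, E c ∧ c.1 ≠ c.2) → (∃ c, E c ∧ c.1 ≠ -c.2) →
    (∃ c, E c ∧ c.1 ≠ 0) → (∃ c, E c ∧ c.2 ≠ 0) → ∀ c, E c := by
  decide +kernel

section

variable (hA : IsMRSub A)
include hA

lemma exists_coord_eq (hi : IsLive A i) (u : SignType) : ∃ x ∈ A, coord x i = u := by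
  obtain ⟨w, hw, hwi⟩ := hi
  rcases eq_or_ne u 0 with rfl | hu
  · exact ⟨⊤, hA.top_mem, rfl⟩
  obtain h | h : coord w i = u ∨ -coord w i = u := by
    revert hwi hu; generalize coord w i = a; revert a u; decide
  · exact ⟨w, hw, h⟩
  · exact ⟨-w, hA.neg_mem hw, by rw [coord_neg, h]⟩

lemma exists_coord_eq_coord_eq (hi : IsLive A i) (hj : IsLive A j) (hij : ¬Linked A i j)
    (u v : SignType) : ∃ x ∈ A, coord x i = u ∧ coord x j = v := by
  classical
  let E (c : SignType × SignType) : Bool := decide (∃ x ∈ A, coord x i = c.1 ∧ coord x j = c.2)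
  have hE (c) : E c ↔ ∃ x ∈ A, coord x i = c.1 ∧ coord x j = c.2 := decide_eq_true_iff
  have hmem {x} (hx : x ∈ A) : E (coord x i, coord x j) := (hE _).mpr ⟨x, hx, rfl, rfl⟩
  refine (hE (u, v)).mp (forall_of_signPairs_closed E ((hE _).mpr ⟨⊤, hA.top_mem, rfl, rfl⟩)
    (fun c d hc hd => ?_) (fun c d hc hd => ?_) ?_ ?_ ?_ ?_ (u, v))
  · obtain ⟨x, hx, hxi, hxj⟩ := (hE c).mp hc
    obtain ⟨y, hy, hyi, hyj⟩ := (hE d).mp hd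
    simpa [hxi, hxj, hyi, hyj] using hmem (hA.sup_mem hx hy)
  · obtain ⟨x, hx, hxi, hxj⟩ := (hE c).mp hc
    obtain ⟨y, hy, hyi, hyj⟩ := (hE d).mp hd
    simpa [hxi, hxj, hyi, hyj] using hmem (hA.delta_mem hx hy)
  all_goals simp only [Linked, not_or, not_forall] at hij
  · obtain ⟨⟨x, hx, hne⟩, -⟩ := hij
    exact ⟨_, hmem hx, hne⟩
  · obtain ⟨-, ⟨x, hx, hne⟩⟩ := hij
    exact ⟨_, hmem hx, hne⟩
  · obtain ⟨x, hx, hne⟩ := hi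
    exact ⟨_, hmem hx, hne⟩
  · obtain ⟨x, hx, hne⟩ := hj
    exact ⟨_, hmem hx, hne⟩

lemma proj_surjOn : Set.SurjOn (proj A) A Set.univ := by
  intro g _
  have := Fintype.ofFinite (Block A)
  have key := exists_eqOn_of_majority (S := proj A '' A) ⟨_, ⊤, hA.top_mem, rfl⟩ ?_ ?_ g
    Finset.univ
  · obtain ⟨_, ⟨x, hx, rfl⟩, hxg⟩ := key
    exact ⟨x, hx, funext fun b => hxg b (Finset.mem_univ b)⟩
  · rintro _ ⟨x, hx, rfl⟩ _ ⟨y, hy, rfl⟩ _ ⟨z, hz, rfl⟩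
    exact ⟨_, ⟨_, hA.majority_mem hx hy hz, rfl⟩, fun b => coord_majority x y z b.rep⟩
  · intro b b' g
    by_cases hb : b = b'
    · subst hb
      obtain ⟨x, hx, hxb⟩ := exists_coord_eq hA b.isLive_rep (g b)
      exact ⟨_, ⟨x, hx, rfl⟩, hxb, hxb⟩
    · obtain ⟨x, hx, hxb⟩ := exists_coord_eq_coord_eq hA b.isLive_rep b'.isLive_rep
        (Block.not_linked_rep hb) (g b) (g b')
      exact ⟨_, ⟨x, hx, rfl⟩, hxb⟩

lemma ncard_eq_three_pow : A.ncard = 3 ^ Nat.card (Block A) := by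
  rw [(Set.BijOn.mk (Set.mapsTo_univ _ _) proj_injOn (proj_surjOn hA)).ncard_eq, Set.ncard_univ,
    Nat.card_fun, Nat.card_eq_fintype_card]
  rfl

lemma le_iff_proj (hx : x ∈ A) (hy : y ∈ A) :
    x ≤ y ↔ ∀ b, proj A y b = 0 ∨ proj A x b = proj A y b := by
  rw [← sup_eq_right, ← proj_injOn.eq_iff (hA.sup_mem hx hy) hy, funext_iff]
  simp only [proj_sup, signSup_eq_right_iff]

lemma mem_coAt_iff (hx : x ∈ A) :
    x ∈ coAt A ↔ ∃ b, ∃ s ≠ 0, proj A x = Pi.single b s := by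
  have hne {y} (hy : y ∈ A) : y ≠ ⊤ ↔ proj A y ≠ 0 := (proj_injOn.ne_iff hy hA.top_mem).symm
  constructor
  · rintro ⟨-, hxt, hmax⟩
    obtain ⟨b, hb⟩ := Function.ne_iff.mp ((hne hx).mp hxt)
    obtain ⟨y, hy, hyb⟩ := proj_surjOn hA (Set.mem_univ (Pi.single b (proj A x b)))
    have hxy : x ≤ y := (le_iff_proj hA hx hy).mpr fun c => by
      rcases eq_or_ne c b with rfl | hc <;> simp [*]
    have hyt : y ≠ ⊤ := (hne hy).mpr (by simpa [hyb] using hb)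
    obtain rfl := hmax y hy hyt hxy
    exact ⟨b, _, hb, hyb⟩
  · rintro ⟨b, s, hs, hxb⟩
    refine ⟨hx, (hne hx).mpr (by simpa [hxb]), fun y hy hyt hxy => proj_injOn hy hx ?_⟩
    have hle := (le_iff_proj hA hx hy).mp hxy
    have hoff : ∀ c ≠ b, proj A y c = 0 := fun c hc => by
      rcases hle c with h | h
      · exact h
      · rw [← h, hxb, Pi.single_eq_of_ne hc]
    have hyb : proj A y b ≠ 0 := fun h0 => (hne hy).mp hyt <| funext fun c => by
      rcases eq_or_ne c b with rfl | hc
      · exact h0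
      · exact hoff c hc
    funext c
    rcases eq_or_ne c b with rfl | hc
    · exact ((hle c).resolve_left hyb).symm
    · rw [hoff c hc, hxb, Pi.single_eq_of_ne hc]

lemma ncard_coAt : (coAt A).ncard = 2 * Nat.card (Block A) := by
  let single (p : Block A × {s : SignType // s ≠ 0}) : Block A → SignType := Pi.single p.1 p.2.1
  have himage : proj A '' coAt A = Set.range single := by
    ext g
    constructor
    · rintro ⟨x, hx, rfl⟩
      obtain ⟨b, s, hs, h⟩ := (mem_coAt_iff hA hx.1).mp hx
      exact ⟨(b, ⟨s, hs⟩), h.symm⟩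
    · rintro ⟨⟨b, s, hs⟩, rfl⟩
      obtain ⟨x, hx, hxg⟩ := proj_surjOn hA (Set.mem_univ (Pi.single b s))
      exact ⟨x, (mem_coAt_iff hA hx).mpr ⟨b, s, hs, hxg⟩, hxg⟩
  have hinj : Function.Injective single := by
    rintro ⟨b, s, hs⟩ ⟨b', s', hs'⟩ h
    obtain rfl : b = b' := by
      by_contra hb
      exact hs (by simpa [single, Pi.single_eq_of_ne hb] using congrFun h b)
    simpa [single] using congrFun h b
  rw [← (proj_injOn.mono fun x hx => hx.1).ncard_image, himage, Set.ncard_range_of_injective hinj,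
    Nat.card_prod, Nat.card_eq_fintype_card (α := {s : SignType // s ≠ 0}), mul_comm]
  rfl

end

variable {A₁ A₂ W : Set (Cube n)} {f : Cube n → Cube n}

structure IsMRHom (f : Cube n → Cube n) : Prop where
  map_top : f ⊤ = ⊤
  map_sup : ∀ x y, f (x ⊔ y) = f x ⊔ f y
  map_delta : ∀ x y, f (delta x y) = delta (f x) (f y)

namespace IsMRSub

lemma image (hZ : IsMRSub Z) (hf : IsMRHom f) : IsMRSub (f '' Z) := by
  refine isMRSub_iff.mpr ⟨⟨⊤, hZ.top_mem, hf.map_top⟩, ?_, ?_⟩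
  · rintro _ ⟨x, hx, rfl⟩ _ ⟨y, hy, rfl⟩
    exact ⟨x ⊔ y, hZ.sup_mem hx hy, hf.map_sup x y⟩
  · rintro _ ⟨x, hx, rfl⟩ _ ⟨y, hy, rfl⟩
    exact ⟨delta x y, hZ.delta_mem hx hy, hf.map_delta x y⟩

lemma preimage (hZ : IsMRSub Z) (hf : IsMRHom f) : IsMRSub (f ⁻¹' Z) := by
  refine isMRSub_iff.mpr ⟨?_, fun x hx y hy => ?_, fun x hx y hy => ?_⟩
  · simpa [hf.map_top] using hZ.top_mem
  · simpa [hf.map_sup] using hZ.sup_mem hx hy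
  · simpa [hf.map_delta] using hZ.delta_mem hx hy

lemma inter (hZ : IsMRSub Z) (hW : IsMRSub W) : IsMRSub (Z ∩ W) :=
  isMRSub_iff.mpr ⟨⟨hZ.top_mem, hW.top_mem⟩, fun _ hx _ hy => ⟨hZ.sup_mem hx.1 hy.1,
    hW.sup_mem hx.2 hy.2⟩, fun _ hx _ hy => ⟨hZ.delta_mem hx.1 hy.1, hW.delta_mem hx.2 hy.2⟩⟩

end IsMRSub

def mrIntervalCongr (hA₁ : IsMRSub A₁) (hf : IsMRHom f) (hbij : Set.BijOn f A₁ A₂) :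
    MRInterval A₁ ≃o MRInterval A₂ where
  toFun Z := ⟨f '' Z.1, Z.2.1.image hf, hbij.image_eq ▸ Set.image_mono Z.2.2⟩
  invFun W := ⟨f ⁻¹' W.1 ∩ A₁, (W.2.1.preimage hf).inter hA₁, Set.inter_subset_right⟩
  left_inv Z := Subtype.ext (hbij.injOn.preimage_image_inter Z.2.2)
  right_inv W := Subtype.ext <| by
    change f '' (f ⁻¹' W.1 ∩ A₁) = W.1
    rw [Set.image_preimage_inter, hbij.image_eq, Set.inter_eq_left.mpr W.2.2]
  map_rel_iff' {Z W} := hbij.injOn.image_subset_image_iff Z.2.2 W.2.2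

lemma exists_isMRHom_bijOn (hA₁ : IsMRSub A₁) (hA₂ : IsMRSub A₂)
    (h : Nat.card (Block A₁) = Nat.card (Block A₂)) : ∃ f, IsMRHom f ∧ Set.BijOn f A₁ A₂ := by
  obtain ⟨e⟩ := Finite.card_eq.mp h
  choose f hfA hf using fun x => proj_surjOn hA₂ (Set.mem_univ (proj A₁ x ∘ e.symm))
  have hf_eq {x y} (hy : y ∈ A₂) (h : proj A₁ x ∘ e.symm = proj A₂ y) : f x = y :=
    proj_injOn (hfA x) hy ((hf x).trans h)
  refine ⟨f, ⟨hf_eq hA₂.top_mem rfl, fun x y => ?_, fun x y => ?_⟩, fun x _ => hfA x,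
    fun x hx y hy hxy => proj_injOn hx hy ?_, fun y hy => ?_⟩
  · exact hf_eq (hA₂.sup_mem (hfA x) (hfA y)) (funext fun b => by simp [hf])
  · exact hf_eq (hA₂.delta_mem (hfA x) (hfA y)) (funext fun b => by simp [hf])
  · have := congrArg (· ∘ e) ((hf x).symm.trans ((congrArg (proj A₂) hxy).trans (hf y)))
    simpa [Function.comp_assoc] using this
  · obtain ⟨x, hx, hxy⟩ := proj_surjOn hA₁ (Set.mem_univ (proj A₂ y ∘ e))
    exact ⟨x, hx, hf_eq hy (by rw [hxy, Function.comp_assoc, e.self_comp_symm, Function.comp_id])⟩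

end Cube

theorem interval_iso_iff_dim_eq_general (n : ℕ) (A₁ A₂ : Set (Cube n))
    (hA₁ : Cube.IsMRSub A₁) (hA₂ : Cube.IsMRSub A₂) :
    Nonempty
        ({Z : Set (Cube n) // Cube.IsMRSub Z ∧ Z ⊆ A₁} ≃o
          {Z : Set (Cube n) // Cube.IsMRSub Z ∧ Z ⊆ A₂}) ↔
      (Cube.coAt A₁).ncard / 2 = (Cube.coAt A₂).ncard / 2 := by
  open Cube in
  rw [ncard_coAt hA₁, ncard_coAt hA₂, Nat.mul_div_cancel_left _ two_pos,
    Nat.mul_div_cancel_left _ two_pos]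
  constructor
  · rintro ⟨e⟩
    have hatoms := Order.natCard_height_eq_of_orderIso e 1
    refine Nat.pow_right_injective (a := 3) (by norm_num) ?_
    simp only [← ncard_eq_three_pow hA₁, ← ncard_eq_three_pow hA₂,
      ncard_eq_two_mul_card_atoms_add_one hA₁, ncard_eq_two_mul_card_atoms_add_one hA₂, hatoms]
  · intro h
    obtain ⟨f, hf, hbij⟩ := exists_isMRHom_bijOn hA₁ hA₂ h
    exact ⟨mrIntervalCongr hA₁ hf hbij⟩

/-- In the poset of MR-subalgebras of `𝓛ₙ`, the intervals `[{𝟙}, A₁]` and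
`[{𝟙}, A₂]` are order isomorphic iff `A₁` and `A₂` have the same dimension. -/
theorem interval_iso_iff_dim_eq (n : ℕ) (A₁ A₂ : Set (Cube n))
    (hA₁ : Cube.IsMRSub A₁) (hA₂ : Cube.IsMRSub A₂)
    (hne₁ : A₁ ≠ {⊤}) (hne₂ : A₂ ≠ {⊤}) :
    Nonempty
        ({Z : Set (Cube n) // Cube.IsMRSub Z ∧ Z ⊆ A₁} ≃o
          {Z : Set (Cube n) // Cube.IsMRSub Z ∧ Z ⊆ A₂}) ↔
      (Cube.coAt A₁).ncard / 2 = (Cube.coAt A₂).ncard / 2 :=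
  interval_iso_iff_dim_eq_general n A₁ A₂ hA₁ hA₂
end

section
/- For 1 ≤ m ≤ n, the number of equivalence classes of pairs (c, B), where B is a Boolean subalgebra of Finset (Fin n) with exactly m atoms and c ∈ Finset (Fin n), under the equivalence (c, B) ~ (c', B') iff B = B' and the symmetric difference c Δ c' belongs to B, equals 2^{n−m} · S(n, m), where S(n, m) is the Stirling number of the second kind. -/
open scoped symmDiff

/-- Stirling numbers of the second kind. -/
def stirling2 : ℕ → ℕ → ℕ
  | 0, 0 => 1
  | 0, _ + 1 => 0
  | _ + 1, 0 => 0
  | n + 1, m + 1 => (m + 1) * stirling2 n (m + 1) + stirling2 n m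

/-- A Boolean subalgebra of `Finset (Fin n)`. -/
def IsBoolSub {n : ℕ} (B : Set (Finset (Fin n))) : Prop :=
  ∅ ∈ B ∧ Finset.univ ∈ B ∧ (∀ x ∈ B, ∀ y ∈ B, x ∪ y ∈ B) ∧
    (∀ x ∈ B, ∀ y ∈ B, x ∩ y ∈ B) ∧ (∀ x ∈ B, xᶜ ∈ B)

/-- The atoms of a Boolean subalgebra `B` of `Finset (Fin n)`. -/
def atomsOf {n : ℕ} (B : Set (Finset (Fin n))) : Set (Finset (Fin n)) :=
  {x | x ∈ B ∧ x ≠ ∅ ∧ ∀ y ∈ B, y ≠ ∅ → y ⊆ x → y = x}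

/-!
The atoms of a Boolean subalgebra `B` of `Finset (Fin n)` partition `Fin n`, and `B` consists
exactly of the unions of blocks; so Boolean subalgebras with `m` atoms correspond to partitions
of `Fin n` into `m` blocks, counted by `S(n, m)`, and each has `2 ^ m` elements. For a fixed
`B`, the relation `c ∆ c' ∈ B` is the coset relation of `B` as an additive subgroup of the
Boolean ring `(Finset (Fin n), ∆, ∩)`, so by Lagrange there are `2 ^ n / 2 ^ m` classes.
-/

theorem Nat.card_sigma_of_card_eq {α : Type*} {β : α → Type*} [∀ a, Finite (β a)] {k : ℕ}
    (h : ∀ a, Nat.card (β a) = k) : Nat.card (Σ a, β a) = Nat.card α * k := by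
  rw [Nat.card_congr ((Equiv.sigmaCongrRight fun a => Finite.equivFinOfCardEq (h a)).trans
    (Equiv.sigmaEquivProd _ _)), Nat.card_prod, Nat.card_fin]

namespace Setoid

variable {α : Type*}

theorem option_ext {s s' : Setoid (Option α)}
    (h_some : ∀ a b, s (some a) (some b) ↔ s' (some a) (some b))
    (h_none : ∀ a, s (some a) none ↔ s' (some a) none) : s = s' := by
  ext (_ | a) (_ | b)
  · exact iff_of_true (s.refl _) (s'.refl _)
  · exact s.comm.trans ((h_none b).trans s'.comm)
  · exact h_none a
  · exact h_some a b

/-- `none` joins the class `c` when `x = some c`, and forms a class of its own when `x = none`. -/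
def extendOption (t : Setoid α) (x : Option (Quotient t)) : Setoid (Option α) :=
  ker fun o => o.elim x fun a => some ⟦a⟧

variable {t : Setoid α} {x : Option (Quotient t)}

@[simp] theorem extendOption_some_some {a b : α} :
    extendOption t x (some a) (some b) ↔ t a b := by
  unfold extendOption; rw [ker_def]; simp [Quotient.eq]

@[simp] theorem extendOption_some_none {a : α} :
    extendOption t x (some a) none ↔ some ⟦a⟧ = x := by
  unfold extendOption; rw [ker_def]; simp

@[simp] theorem comap_some_extendOption : (extendOption t x).comap some = t := by
  ext a b
  simp [comap_rel]

theorem extendOption_injective : Function.Injective (extendOption t) := by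
  intro x y h
  have hxy : ∀ a : α, some ⟦a⟧ = x ↔ some ⟦a⟧ = y := fun a => by
    rw [← extendOption_some_none, h, extendOption_some_none]
  rcases x with _ | ⟨⟨a⟩⟩
  · rcases y with _ | ⟨⟨b⟩⟩
    · rfl
    · exact absurd ((hxy b).2 rfl) (Option.some_ne_none _)
  · exact (hxy a).1 rfl

theorem exists_extendOption_eq (s : Setoid (Option α)) :
    ∃ x, extendOption (s.comap some) x = s := by
  by_cases h : ∃ a, s (some a) none
  · obtain ⟨a, ha⟩ := h
    refine ⟨some ⟦a⟧, option_ext (by simp [comap_rel]) fun b => ?_⟩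
    simp only [extendOption_some_none, Option.some_inj, Quotient.eq, comap_rel]
    exact ⟨fun hb => s.trans hb ha, fun hb => s.trans hb (s.symm ha)⟩
  · push Not at h
    exact ⟨none, option_ext (by simp [comap_rel]) fun b => by simpa using h b⟩

theorem card_quotient_extendOption [Finite α] :
    Nat.card (Quotient (extendOption t x)) = (insert x (Set.range some)).ncard := by
  unfold extendOption
  rw [Nat.card_congr (quotientKerEquivRange _), Option.range_elim, Nat.card_coe_set_eq]
  simp [Set.range_comp']

theorem card_quotient_extendOption_none [Finite α] :
    Nat.card (Quotient (extendOption t none)) = Nat.card (Quotient t) + 1 := by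
  rw [card_quotient_extendOption, Set.ncard_insert_of_notMem (by simp),
    Set.ncard_range_of_injective (Option.some_injective _)]

theorem card_quotient_extendOption_some [Finite α] {c : Quotient t} :
    Nat.card (Quotient (extendOption t (some c))) = Nat.card (Quotient t) := by
  rw [card_quotient_extendOption, Set.insert_eq_of_mem (Set.mem_range_self c),
    Set.ncard_range_of_injective (Option.some_injective _)]

variable (α) in
/-- Removing `none` from a partition of `Option α` into `m + 1` blocks either removes a block
or shrinks one of them. -/
noncomputable def setoidsOptionEquiv [Finite α] (m : ℕ) :
    (Σ t : {t : Setoid α // Nat.card (Quotient t) = m + 1}, Quotient t.1) ⊕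
        {t : Setoid α // Nat.card (Quotient t) = m} ≃
      {s : Setoid (Option α) // Nat.card (Quotient s) = m + 1} := by
  refine Equiv.ofBijective
    (Sum.elim (fun p => ⟨extendOption p.1.1 (some p.2), by
        rw [card_quotient_extendOption_some, p.1.2]⟩)
      fun t => ⟨extendOption t.1 none, by rw [card_quotient_extendOption_none, t.2]⟩) ⟨?_, ?_⟩
  · rintro (⟨⟨t, ht⟩, c⟩ | ⟨t, ht⟩) (⟨⟨t', ht'⟩, c'⟩ | ⟨t', ht'⟩) h <;>
      simp only [Sum.elim_inl, Sum.elim_inr, Subtype.mk.injEq] at h <;>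
      (obtain rfl : t = t' := by simpa using congrArg (comap some) h) <;>
      cases extendOption_injective h <;> rfl
  · rintro ⟨s, hs⟩
    obtain ⟨_ | c, hx⟩ := exists_extendOption_eq s
    · refine ⟨Sum.inr ⟨s.comap some, ?_⟩, Subtype.ext hx⟩
      simpa [← hx, card_quotient_extendOption_none] using hs
    · refine ⟨Sum.inl ⟨⟨s.comap some, ?_⟩, c⟩, Subtype.ext hx⟩
      rwa [← hx, card_quotient_extendOption_some] at hs

instance finite [Finite α] : Finite (Setoid α) :=
  Finite.of_injective (⇑) fun _ _ => eq_iff_rel_eq.2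

theorem card_subtype_card_quotient_congr {β : Type*} (e : α ≃ β) (m : ℕ) :
    Nat.card {s : Setoid α // Nat.card (Quotient s) = m} =
      Nat.card {s : Setoid β // Nat.card (Quotient s) = m} := by
  refine Nat.card_congr (Equiv.subtypeEquiv
    { toFun := comap e.symm, invFun := comap e,
      left_inv := fun s => by ext; simp [comap_rel],
      right_inv := fun s => by ext; simp [comap_rel] } fun s => ?_)
  rw [Nat.card_congr (Quotient.congr e fun a b => ?_)]
  show s a b ↔ s (e.symm (e a)) (e.symm (e b))
  simp

theorem card_subtype_card_quotient_eq_stirling2 (n m : ℕ) :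
    Nat.card {s : Setoid (Fin n) // Nat.card (Quotient s) = m} = stirling2 n m := by
  induction n generalizing m with
  | zero =>
    have : Subsingleton (Setoid (Fin 0)) := ⟨fun s t => by ext a; exact a.elim0⟩
    rcases m with _ | m <;> simp [stirling2]
  | succ n ih =>
    rw [card_subtype_card_quotient_congr (finSuccEquiv n)]
    rcases m with _ | m
    · have : IsEmpty {s : Setoid (Option (Fin n)) // Nat.card (Quotient s) = 0} :=
        ⟨fun s => Nat.card_pos.ne' s.2⟩
      exact Nat.card_of_isEmpty
    · rw [← Nat.card_congr (setoidsOptionEquiv (Fin n) m), Nat.card_sum,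
        Nat.card_sigma_of_card_eq fun t => t.2, ih, ih, stirling2]
      ring

end Setoid

section BooleanRing

variable {α : Type*} [BooleanAlgebra α]

def symmDiffAddSubgroup (B : Set α) (h_bot : ⊥ ∈ B)
    (h_symmDiff : ∀ x ∈ B, ∀ y ∈ B, x ∆ y ∈ B) : AddSubgroup (AsBoolRing α) where
  carrier := ofBoolRing ⁻¹' B
  add_mem' ha hb := h_symmDiff _ ha _ hb
  zero_mem' := h_bot
  neg_mem' := id

def symmDiffSetoid (B : Set α) (h_bot : ⊥ ∈ B) (h_symmDiff : ∀ x ∈ B, ∀ y ∈ B, x ∆ y ∈ B) :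
    Setoid α :=
  (QuotientAddGroup.leftRel (symmDiffAddSubgroup B h_bot h_symmDiff)).comap toBoolRing

variable {B : Set α} {h_bot : ⊥ ∈ B} {h_symmDiff : ∀ x ∈ B, ∀ y ∈ B, x ∆ y ∈ B}

theorem symmDiffSetoid_apply {x y : α} : symmDiffSetoid B h_bot h_symmDiff x y ↔ x ∆ y ∈ B :=
  QuotientAddGroup.leftRel_apply (x := toBoolRing x) (y := toBoolRing y)

theorem card_quotient_symmDiffSetoid_mul [Finite α] :
    Nat.card (Quotient (symmDiffSetoid B h_bot h_symmDiff)) * Nat.card B = Nat.card α := by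
  have : Finite (AsBoolRing α) := Finite.of_equiv α toBoolRing
  rw [← Nat.card_congr (ofBoolRing (α := α)), AddSubgroup.card_eq_card_quotient_mul_card_addSubgroup
    (symmDiffAddSubgroup B h_bot h_symmDiff)]
  rfl

end BooleanRing

section BoolSub

variable {n : ℕ}

namespace Setoid

open Classical in
noncomputable def classUnion (s : Setoid (Fin n)) (S : Set (Quotient s)) : Finset (Fin n) :=
  {i | ⟦i⟧ ∈ S}

def classAlgebra (s : Setoid (Fin n)) : Set (Finset (Fin n)) :=
  Set.range s.classUnion

variable {s : Setoid (Fin n)}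

@[simp] theorem mem_classUnion {S : Set (Quotient s)} {i : Fin n} :
    i ∈ s.classUnion S ↔ ⟦i⟧ ∈ S := by
  simp [classUnion]

theorem classUnion_subset_classUnion_iff {S T : Set (Quotient s)} :
    s.classUnion S ⊆ s.classUnion T ↔ S ⊆ T := by
  refine ⟨fun h q hq => ?_, fun h i => by simpa using @h _⟩
  induction q using Quotient.ind
  exact mem_classUnion.1 (h (mem_classUnion.2 hq))

theorem classUnion_injective : Function.Injective s.classUnion := fun _ _ h =>
  (classUnion_subset_classUnion_iff.1 h.le).antisymm (classUnion_subset_classUnion_iff.1 h.ge)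

@[simp] theorem classUnion_eq_empty_iff {S : Set (Quotient s)} :
    s.classUnion S = ∅ ↔ S = ∅ := by
  simp [Finset.eq_empty_iff_forall_notMem, Set.eq_empty_iff_forall_notMem, Quotient.forall]

theorem isBoolSub_classAlgebra (s : Setoid (Fin n)) : IsBoolSub s.classAlgebra := by
  refine ⟨⟨∅, by ext; simp⟩, ⟨Set.univ, by ext; simp⟩, ?_, ?_, ?_⟩
  · rintro _ ⟨S, rfl⟩ _ ⟨T, rfl⟩
    exact ⟨S ∪ T, by ext; simp⟩
  · rintro _ ⟨S, rfl⟩ _ ⟨T, rfl⟩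
    exact ⟨S ∩ T, by ext; simp⟩
  · rintro _ ⟨S, rfl⟩
    exact ⟨Sᶜ, by ext; simp⟩

theorem atomsOf_classAlgebra : atomsOf s.classAlgebra = Set.range fun q => s.classUnion {q} := by
  ext x
  constructor
  · rintro ⟨⟨S, rfl⟩, hS, hmin⟩
    obtain ⟨q, hq⟩ := Set.nonempty_iff_ne_empty.2 (mt classUnion_eq_empty_iff.2 hS)
    exact ⟨q, hmin _ ⟨_, rfl⟩ (by simp) (classUnion_subset_classUnion_iff.2 (by simpa))⟩
  · rintro ⟨q, rfl⟩
    refine ⟨⟨_, rfl⟩, by simp, ?_⟩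
    rintro _ ⟨T, rfl⟩ hT hTq
    rcases Set.subset_singleton_iff_eq.1 (classUnion_subset_classUnion_iff.1 hTq) with h | h
    · exact absurd (classUnion_eq_empty_iff.2 h) hT
    · rw [h]

theorem ncard_atomsOf_classAlgebra : (atomsOf s.classAlgebra).ncard = Nat.card (Quotient s) := by
  rw [atomsOf_classAlgebra,
    Set.ncard_range_of_injective fun _ _ h => Set.singleton_injective (classUnion_injective h)]

theorem card_classAlgebra : Nat.card s.classAlgebra = 2 ^ Nat.card (Quotient s) := by
  classical
  rw [classAlgebra, Nat.card_coe_set_eq, Set.ncard_range_of_injective classUnion_injective,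
    Nat.card_eq_fintype_card, Fintype.card_set, Nat.card_eq_fintype_card]

end Setoid

def membershipSetoid (B : Set (Finset (Fin n))) : Setoid (Fin n) where
  r i j := ∀ x ∈ B, i ∈ x ↔ j ∈ x
  iseqv := ⟨fun _ _ _ => Iff.rfl, fun h x hx => (h x hx).symm,
    fun h h' x hx => (h x hx).trans (h' x hx)⟩

theorem membershipSetoid_classAlgebra (s : Setoid (Fin n)) :
    membershipSetoid s.classAlgebra = s := by
  ext i j
  refine ⟨fun h => ?_, fun h => ?_⟩
  · have hj : j ∈ s.classUnion {⟦i⟧} := (h _ ⟨_, rfl⟩).1 (by simp)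
    have : Quotient.mk s j = ⟦i⟧ := by simpa using hj
    exact Quotient.exact this.symm
  · rintro _ ⟨S, rfl⟩
    simp [Quotient.sound h]

namespace IsBoolSub

variable {B : Set (Finset (Fin n))} (hB : IsBoolSub B)
include hB

theorem classUnion_singleton_mem (i : Fin n) : (membershipSetoid B).classUnion {⟦i⟧} ∈ B := by
  classical
  have : (membershipSetoid B).classUnion {⟦i⟧} =
      (B.toFinite.toFinset).inf fun x => if i ∈ x then x else xᶜ := by
    ext j
    simp only [Setoid.mem_classUnion, Set.mem_singleton_iff, Quotient.eq, Finset.mem_inf,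
      Set.Finite.mem_toFinset]
    exact forall₂_congr fun x _ => by split_ifs with hi <;> simp [hi]
  rw [this]
  refine Finset.inf_mem B hB.2.1 hB.2.2.2.1 _ _ fun x hx => ?_
  split_ifs
  · exact B.toFinite.mem_toFinset.1 hx
  · exact hB.2.2.2.2 _ (B.toFinite.mem_toFinset.1 hx)

theorem classUnion_mem (S : Set (Quotient (membershipSetoid B))) :
    (membershipSetoid B).classUnion S ∈ B := by
  classical
  have : (membershipSetoid B).classUnion S =
      ((membershipSetoid B).classUnion S).sup fun i => (membershipSetoid B).classUnion {⟦i⟧} := by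
    ext j
    simp only [Setoid.mem_classUnion, Finset.mem_sup, Set.mem_singleton_iff]
    exact ⟨fun hj => ⟨j, hj, rfl⟩, fun ⟨i, hi, hji⟩ => hji ▸ hi⟩
  rw [this]
  exact Finset.sup_mem B hB.1 hB.2.2.1 _ _ fun i _ => hB.classUnion_singleton_mem i

theorem classAlgebra_membershipSetoid : (membershipSetoid B).classAlgebra = B := by
  refine (Set.range_subset_iff.2 hB.classUnion_mem).antisymm fun x hx =>
    ⟨Quotient.mk _ '' x, ?_⟩
  ext i
  simp only [Setoid.mem_classUnion, Set.mem_image, Finset.mem_coe, Quotient.eq]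
  exact ⟨fun ⟨j, hj, hji⟩ => (hji x hx).1 hj, fun hi => ⟨i, hi, (membershipSetoid B).refl i⟩⟩

theorem card_eq : Nat.card B = 2 ^ (atomsOf B).ncard := by
  rw [← hB.classAlgebra_membershipSetoid, Setoid.card_classAlgebra,
    Setoid.ncard_atomsOf_classAlgebra]

theorem symmDiff_mem : ∀ x ∈ B, ∀ y ∈ B, x ∆ y ∈ B := by
  obtain ⟨-, -, h_union, h_inter, h_compl⟩ := hB
  intro x hx y hy
  rw [symmDiff_def, sdiff_eq, sdiff_eq]
  exact h_union _ (h_inter _ hx _ (h_compl _ hy)) _ (h_inter _ hy _ (h_compl _ hx))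

theorem card_quotient_symmDiffSetoid :
    Nat.card (Quotient (symmDiffSetoid B hB.1 hB.symmDiff_mem)) =
      2 ^ (n - (atomsOf B).ncard) := by
  have h := card_quotient_symmDiffSetoid_mul (h_bot := hB.1) (h_symmDiff := hB.symmDiff_mem)
  rw [hB.card_eq, Nat.card_eq_fintype_card (α := Finset (Fin n)), Fintype.card_finset,
    Fintype.card_fin] at h
  have hle : (atomsOf B).ncard ≤ n :=
    (Nat.pow_dvd_pow_iff_le_right (by norm_num)).1 (Dvd.intro_left _ h)
  have h_split : 2 ^ n = 2 ^ (n - (atomsOf B).ncard) * 2 ^ (atomsOf B).ncard := by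
    rw [← pow_add, Nat.sub_add_cancel hle]
  exact Nat.eq_of_mul_eq_mul_right (by positivity) (h.trans h_split)

end IsBoolSub

noncomputable def boolSubEquivSetoid (m : ℕ) :
    {B : Set (Finset (Fin n)) // IsBoolSub B ∧ (atomsOf B).ncard = m} ≃
      {s : Setoid (Fin n) // Nat.card (Quotient s) = m} where
  toFun B := ⟨membershipSetoid B.1, by
    rw [← Setoid.ncard_atomsOf_classAlgebra, B.2.1.classAlgebra_membershipSetoid, B.2.2]⟩
  invFun s := ⟨s.1.classAlgebra, Setoid.isBoolSub_classAlgebra _, by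
    rw [Setoid.ncard_atomsOf_classAlgebra, s.2]⟩
  left_inv B := Subtype.ext B.2.1.classAlgebra_membershipSetoid
  right_inv s := Subtype.ext (membershipSetoid_classAlgebra s.1)

end BoolSub

theorem ncard_classes_eq_card_sigma {X Y : Type*} (P : Y → Prop) (R : Y → X → X → Prop)
    (s : Subtype P → Setoid X) (hs : ∀ y x x', s y x x' ↔ R y x x') :
    {S : Set (X × Y) | ∃ p : X × Y, P p.2 ∧ S = {q | P q.2 ∧ p.2 = q.2 ∧ R p.2 p.1 q.1}}.ncard =
      Nat.card (Σ y : Subtype P, Quotient (s y)) := by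
  let cls (yq : Σ y : Subtype P, Quotient (s y)) : Set (X × Y) :=
    yq.2.lift (fun x => {p | P p.2 ∧ yq.1.1 = p.2 ∧ R yq.1.1 x p.1}) fun x x' h => by
      ext p
      simp only [Set.mem_ofPred_eq, ← hs]
      exact and_congr_right fun _ => and_congr_right fun _ =>
        ⟨(s _).trans ((s _).symm h), (s _).trans h⟩
  have hcls : Function.Injective cls := by
    rintro ⟨⟨y, hy⟩, ⟨x⟩⟩ ⟨⟨y', hy'⟩, ⟨x'⟩⟩ h
    have hx' : (x', y') ∈ cls ⟨⟨y', hy'⟩, ⟦x'⟧⟩ := ⟨hy', rfl, (hs _ _ _).1 ((s _).refl x')⟩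
    obtain ⟨-, rfl, hr⟩ := h ▸ hx'
    exact Sigma.ext rfl (heq_of_eq (Quotient.sound ((hs _ _ _).2 hr)))
  convert Set.ncard_range_of_injective hcls
  ext S
  constructor
  · rintro ⟨⟨x, y⟩, hy, rfl⟩
    exact ⟨⟨⟨y, hy⟩, ⟦x⟧⟩, rfl⟩
  · rintro ⟨⟨⟨y, hy⟩, ⟨x⟩⟩, rfl⟩
    exact ⟨(x, y), hy, rfl⟩

theorem count_located_subalgebras_general (n m : ℕ) :
    ({S : Set (Finset (Fin n) × Set (Finset (Fin n))) |
        ∃ p : Finset (Fin n) × Set (Finset (Fin n)),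
          (IsBoolSub p.2 ∧ (atomsOf p.2).ncard = m) ∧
            S = {q | (IsBoolSub q.2 ∧ (atomsOf q.2).ncard = m) ∧
                  p.2 = q.2 ∧ p.1 ∆ q.1 ∈ p.2}}).ncard =
      2 ^ (n - m) * stirling2 n m := by
  calc _ = Nat.card (Σ B : {B : Set (Finset (Fin n)) // IsBoolSub B ∧ (atomsOf B).ncard = m},
          Quotient (symmDiffSetoid B.1 B.2.1.1 B.2.1.symmDiff_mem)) :=
        ncard_classes_eq_card_sigma _ (fun B x y => x ∆ y ∈ B) _ fun _ _ _ => symmDiffSetoid_apply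
    _ = Nat.card {B : Set (Finset (Fin n)) // IsBoolSub B ∧ (atomsOf B).ncard = m} * 2 ^ (n - m) :=
        Nat.card_sigma_of_card_eq fun B => by rw [B.2.1.card_quotient_symmDiffSetoid, B.2.2]
    _ = 2 ^ (n - m) * stirling2 n m := by
        rw [Nat.card_congr (boolSubEquivSetoid m),
          Setoid.card_subtype_card_quotient_eq_stirling2, mul_comm]

/-- The number of equivalence classes of pairs `(c, B)`, with `B` a Boolean
subalgebra of `Finset (Fin n)` with `m` atoms and `c : Finset (Fin n)`, under
`(c, B) ~ (c', B')` iff `B = B'` and `c Δ c' ∈ B`, is `2^{n-m} S(n,m)`. -/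
theorem count_located_subalgebras (n m : ℕ) (h1 : 1 ≤ m) (h2 : m ≤ n) :
    ({S : Set (Finset (Fin n) × Set (Finset (Fin n))) |
        ∃ p : Finset (Fin n) × Set (Finset (Fin n)),
          (IsBoolSub p.2 ∧ (atomsOf p.2).ncard = m) ∧
            S = {q | (IsBoolSub q.2 ∧ (atomsOf q.2).ncard = m) ∧
                  p.2 = q.2 ∧ p.1 ∆ q.1 ∈ p.2}}).ncard =
      2 ^ (n - m) * stirling2 n m :=
  count_located_subalgebras_general n m
end
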